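/- arXiv:2510.17407 — 7 statements merged into one kernel-verified Lean document; each statement's English description precedes it below -/
import Mathlib

section
/- Let $p \in (1, \infty)$ and let $\rho_0, \rho_1, \mu_0, \mu_1$ be probability measures on $\mathbb{R}^d$ with finite $p$-th moments. Let $\gamma_0 \in \Pi(\rho_0, \mu_0)$ and $\gamma_1 \in \Pi(\rho_1, \mu_1)$ be any couplings (in particular optimal transport plans). Then $W_p^p(\gamma_0, \gamma_1) \geq c_p (W_p^p(\rho_0, \rho_1) + W_p^p(\mu_0, \mu_1))$, where $c_p = \min(1, 2^{p/2 - 1})$ and the Wasserstein distance between $\gamma_0, \gamma_1$ is taken for the Euclidean distance on $\mathbb{R}^d \times \mathbb{R}^d$. -/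
/-!
A coupling `Γ` of `γ₀` and `γ₁` projects, component by component, onto a coupling of `ρ₀` and `ρ₁`
and a coupling of `μ₀` and `μ₁`. Pointwise, the product cost `(a + b) ^ (p / 2)` with
`a = |x₀ - x₁|²`, `b = |y₀ - y₁|²` dominates `c_p (a ^ (p / 2) + b ^ (p / 2))`: this is
superadditivity of `t ↦ t ^ r` for `r ≥ 1` and midpoint concavity for `r ≤ 1`. Integrating
against `Γ` and taking the infimum over `Γ` gives the inequality.
-/

open MeasureTheory ENNReal

/-- The infimum of the `cost`-transport cost over all couplings of `μ` and `ν`. -/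
noncomputable def Wpow {α : Type*} [MeasurableSpace α]
    (cost : α → α → ℝ) (μ ν : Measure α) : ℝ≥0∞ :=
  ⨅ γ ∈ {γ : Measure (α × α) | γ.fst = μ ∧ γ.snd = ν},
    ∫⁻ q, ENNReal.ofReal (cost q.1 q.2) ∂γ

namespace Real

lemma two_rpow_sub_one_mul_add_rpow_le {r : ℝ} (hr₀ : 0 ≤ r) (hr₁ : r ≤ 1) {x y : ℝ}
    (hx : 0 ≤ x) (hy : 0 ≤ y) : 2 ^ (r - 1) * (x ^ r + y ^ r) ≤ (x + y) ^ r := by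
  have hmid := (concaveOn_rpow hr₀ hr₁).2 (Set.mem_Ici.2 hx) (Set.mem_Ici.2 hy)
    (by norm_num : (0 : ℝ) ≤ 1 / 2) (by norm_num : (0 : ℝ) ≤ 1 / 2) (by norm_num)
  simp only [smul_eq_mul] at hmid
  have hsplit : (x + y) ^ r = 2 ^ r * ((1 / 2) * x + (1 / 2) * y) ^ r := by
    rw [← mul_rpow (by norm_num) (by positivity)]; ring_nf
  rw [hsplit, rpow_sub_one two_ne_zero]
  calc 2 ^ r / 2 * (x ^ r + y ^ r) = 2 ^ r * ((1 / 2) * x ^ r + (1 / 2) * y ^ r) := by ring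
    _ ≤ _ := by gcongr

lemma min_one_two_rpow_mul_add_rpow_le {r : ℝ} (hr : 0 ≤ r) {x y : ℝ}
    (hx : 0 ≤ x) (hy : 0 ≤ y) : min 1 (2 ^ (r - 1)) * (x ^ r + y ^ r) ≤ (x + y) ^ r := by
  have hsum : 0 ≤ x ^ r + y ^ r := by positivity
  rcases le_total 1 r with h | h
  · exact (mul_le_of_le_one_left hsum (min_le_left _ _)).trans (add_rpow_le_rpow_add hx hy h)
  · exact (mul_le_mul_of_nonneg_right (min_le_right _ _) hsum).trans
      (two_rpow_sub_one_mul_add_rpow_le hr h hx hy)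

lemma min_one_two_rpow_mul_add_rpow_le_sq_add_sq {p : ℝ} (hp : 0 ≤ p) {s t : ℝ}
    (hs : 0 ≤ s) (ht : 0 ≤ t) :
    min 1 (2 ^ (p / 2 - 1)) * (s ^ p + t ^ p) ≤ (s ^ 2 + t ^ 2) ^ (p / 2) := by
  have hsq : ∀ u : ℝ, 0 ≤ u → (u ^ 2) ^ (p / 2) = u ^ p := fun u hu => by
    rw [← rpow_natCast_mul hu, Nat.cast_ofNat, mul_div_cancel₀ p two_ne_zero]
  simpa only [hsq s hs, hsq t ht] using
    min_one_two_rpow_mul_add_rpow_le (by linarith : 0 ≤ p / 2) (sq_nonneg s) (sq_nonneg t)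

end Real

section Wpow

variable {α β : Type*} [MeasurableSpace α] [MeasurableSpace β]

lemma Wpow_le_lintegral (cost : α → α → ℝ) {μ ν : Measure α} {γ : Measure (α × α)}
    (hμ : γ.fst = μ) (hν : γ.snd = ν) :
    Wpow cost μ ν ≤ ∫⁻ q, ENNReal.ofReal (cost q.1 q.2) ∂γ :=
  iInf₂_le γ ⟨hμ, hν⟩

lemma Wpow_fst_le_lintegral (cost : α → α → ℝ) (Γ : Measure ((α × β) × (α × β))) :
    Wpow cost Γ.fst.fst Γ.snd.fst ≤ ∫⁻ q, ENNReal.ofReal (cost q.1.1 q.2.1) ∂Γ := by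
  refine (Wpow_le_lintegral cost (γ := Γ.map fun q => (q.1.1, q.2.1)) ?_ ?_).trans
    (lintegral_map_le _ _)
  · rw [Measure.fst_map_prodMk (by fun_prop), Measure.fst, Measure.fst,
      Measure.map_map measurable_fst measurable_fst]
    rfl
  · rw [Measure.snd_map_prodMk (by fun_prop), Measure.snd, Measure.fst,
      Measure.map_map measurable_fst measurable_snd]
    rfl

lemma Wpow_snd_le_lintegral (cost : β → β → ℝ) (Γ : Measure ((α × β) × (α × β))) :
    Wpow cost Γ.fst.snd Γ.snd.snd ≤ ∫⁻ q, ENNReal.ofReal (cost q.1.2 q.2.2) ∂Γ := by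
  refine (Wpow_le_lintegral cost (γ := Γ.map fun q => (q.1.2, q.2.2)) ?_ ?_).trans
    (lintegral_map_le _ _)
  · rw [Measure.fst_map_prodMk (by fun_prop), Measure.snd, Measure.fst,
      Measure.map_map measurable_snd measurable_fst]
    rfl
  · rw [Measure.snd_map_prodMk (by fun_prop), Measure.snd, Measure.snd,
      Measure.map_map measurable_snd measurable_snd]
    rfl

lemma mul_Wpow_fst_add_Wpow_snd_le_Wpow (c₁ : α → α → ℝ) (c₂ : β → β → ℝ)
    (cost : α × β → α × β → ℝ) (k : ℝ≥0∞)
    (hcost : ∀ a b, k * (ENNReal.ofReal (c₁ a.1 b.1) + ENNReal.ofReal (c₂ a.2 b.2))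
      ≤ ENNReal.ofReal (cost a b))
    (γ₀ γ₁ : Measure (α × β)) :
    k * (Wpow c₁ γ₀.fst γ₁.fst + Wpow c₂ γ₀.snd γ₁.snd) ≤ Wpow cost γ₀ γ₁ := by
  refine le_iInf₂ fun Γ ⟨hΓ₀, hΓ₁⟩ => ?_
  subst hΓ₀ hΓ₁
  calc k * (Wpow c₁ Γ.fst.fst Γ.snd.fst + Wpow c₂ Γ.fst.snd Γ.snd.snd)
      ≤ k * (∫⁻ q, ENNReal.ofReal (c₁ q.1.1 q.2.1) ∂Γ
          + ∫⁻ q, ENNReal.ofReal (c₂ q.1.2 q.2.2) ∂Γ) := by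
        gcongr
        exacts [Wpow_fst_le_lintegral c₁ Γ, Wpow_snd_le_lintegral c₂ Γ]
    _ ≤ k * ∫⁻ q, (ENNReal.ofReal (c₁ q.1.1 q.2.1) + ENNReal.ofReal (c₂ q.1.2 q.2.2)) ∂Γ := by
        gcongr
        exact le_lintegral_add _ _
    _ ≤ ∫⁻ q, k * (ENNReal.ofReal (c₁ q.1.1 q.2.1) + ENNReal.ofReal (c₂ q.1.2 q.2.2)) ∂Γ :=
        lintegral_const_mul_le _ _
    _ ≤ ∫⁻ q, ENNReal.ofReal (cost q.1 q.2) ∂Γ := lintegral_mono fun q => hcost q.1 q.2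

end Wpow

theorem reverse_stability_of_plans_general {d : ℕ} (p : ℝ) (hp : 1 < p)
    (ρ₀ ρ₁ μ₀ μ₁ : Measure (EuclideanSpace ℝ (Fin d)))
    (γ₀ γ₁ : Measure (EuclideanSpace ℝ (Fin d) × EuclideanSpace ℝ (Fin d)))
    (hγ₀f : γ₀.fst = ρ₀) (hγ₀s : γ₀.snd = μ₀)
    (hγ₁f : γ₁.fst = ρ₁) (hγ₁s : γ₁.snd = μ₁) :
    ENNReal.ofReal (min 1 (2 ^ (p / 2 - 1))) *
        (Wpow (fun x y => dist x y ^ p) ρ₀ ρ₁ + Wpow (fun x y => dist x y ^ p) μ₀ μ₁)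
      ≤ Wpow (fun a b => (dist a.1 b.1 ^ 2 + dist a.2 b.2 ^ 2) ^ (p / 2)) γ₀ γ₁ := by
  subst hγ₀f hγ₀s hγ₁f hγ₁s
  refine mul_Wpow_fst_add_Wpow_snd_le_Wpow _ _ _ _ (fun a b => ?_) γ₀ γ₁
  rw [← ENNReal.ofReal_add (by positivity) (by positivity),
    ← ENNReal.ofReal_mul (by positivity)]
  exact ENNReal.ofReal_le_ofReal
    (Real.min_one_two_rpow_mul_add_rpow_le_sq_add_sq (by linarith) dist_nonneg dist_nonneg)

/-- Reverse stability of transport plans: for any couplings `γ₀ ∈ Π(ρ₀, μ₀)`,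
`γ₁ ∈ Π(ρ₁, μ₁)`, one has
`W_p^p(γ₀, γ₁) ≥ c_p (W_p^p(ρ₀, ρ₁) + W_p^p(μ₀, μ₁))` with `c_p = min 1 (2^(p/2-1))`,
the Wasserstein distance between plans being taken for the Euclidean distance on the product. -/
theorem reverse_stability_of_plans {d : ℕ} (p : ℝ) (hp : 1 < p)
    (ρ₀ ρ₁ μ₀ μ₁ : Measure (EuclideanSpace ℝ (Fin d)))
    [IsProbabilityMeasure ρ₀] [IsProbabilityMeasure ρ₁]
    [IsProbabilityMeasure μ₀] [IsProbabilityMeasure μ₁]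
    (hmρ₀ : ∫⁻ x, ENNReal.ofReal (‖x‖ ^ p) ∂ρ₀ < ⊤)
    (hmρ₁ : ∫⁻ x, ENNReal.ofReal (‖x‖ ^ p) ∂ρ₁ < ⊤)
    (hmμ₀ : ∫⁻ x, ENNReal.ofReal (‖x‖ ^ p) ∂μ₀ < ⊤)
    (hmμ₁ : ∫⁻ x, ENNReal.ofReal (‖x‖ ^ p) ∂μ₁ < ⊤)
    (γ₀ γ₁ : Measure (EuclideanSpace ℝ (Fin d) × EuclideanSpace ℝ (Fin d)))
    (hγ₀f : γ₀.fst = ρ₀) (hγ₀s : γ₀.snd = μ₀)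
    (hγ₁f : γ₁.fst = ρ₁) (hγ₁s : γ₁.snd = μ₁) :
    ENNReal.ofReal (min 1 (2 ^ (p / 2 - 1))) *
        (Wpow (fun x y => dist x y ^ p) ρ₀ ρ₁ + Wpow (fun x y => dist x y ^ p) μ₀ μ₁)
      ≤ Wpow (fun a b => (dist a.1 b.1 ^ 2 + dist a.2 b.2 ^ 2) ^ (p / 2)) γ₀ γ₁ :=
  reverse_stability_of_plans_general p hp ρ₀ ρ₁ μ₀ μ₁ γ₀ γ₁ hγ₀f hγ₀s hγ₁f hγ₁s
end

section
/- Let $C \in \mathbb{R}^{M\times N}$ and let $D(C) = \{(\phi,\psi) \in \mathbb{R}^{M+N} : \phi_i + \psi_j \leq C_{ij} \ \forall i,j\}$. Let $(\phi,\psi) \in D(C)$ with $\phi_1 = 0$, and define the bipartite graph $G(\phi,\psi)$ with vertex sets $\{1,\dots,M\}$ and $\{1,\dots,N\}$ and an edge $(i,j)$ iff $\phi_i + \psi_j = C_{ij}$. If $G(\phi,\psi)$ is connected, then $(\phi,\psi)$ is an extreme point of the polyhedron $D(C) \cap \{\phi_1 = 0\}$. -/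
/-- The dual transport polyhedron `D(C)`. -/
def dualPolyhedron {M N : ℕ} (C : Matrix (Fin M) (Fin N) ℝ) :
    Set ((Fin M → ℝ) × (Fin N → ℝ)) :=
  {p | ∀ i j, p.1 i + p.2 j ≤ C i j}

/-- The relation generating the bipartite equality graph `G(φ, ψ)`: an edge between
`i` and `j` iff the constraint `φ i + ψ j ≤ C i j` is tight. -/
def eqRel {M N : ℕ} (C : Matrix (Fin M) (Fin N) ℝ) (φ : Fin M → ℝ) (ψ : Fin N → ℝ) :
    (Fin M ⊕ Fin N) → (Fin M ⊕ Fin N) → Prop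
  | Sum.inl i, Sum.inr j => φ i + ψ j = C i j
  | _, _ => False

/-- If the equality graph `G(φ, ψ)` is connected, then `(φ, ψ)` is an extreme point of
`D(C) ∩ {φ₁ = 0}`. -/
theorem extreme_of_connected_eqGraph {M N : ℕ} [NeZero M]
    (C : Matrix (Fin M) (Fin N) ℝ) (φ : Fin M → ℝ) (ψ : Fin N → ℝ)
    (hmem : (φ, ψ) ∈ dualPolyhedron C) (h0 : φ 0 = 0)
    (hconn : (SimpleGraph.fromRel (eqRel C φ ψ)).Connected) :
    (φ, ψ) ∈ (dualPolyhedron C ∩ {p | p.1 0 = 0}).extremePoints ℝ := by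
  classical
  -- main claim: any point of the set saturating all tight constraints equals (φ, ψ)
  have main : ∀ r : (Fin M → ℝ) × (Fin N → ℝ), r ∈ dualPolyhedron C → r.1 0 = 0 →
      (∀ i j, φ i + ψ j = C i j → r.1 i + r.2 j = C i j) → r = (φ, ψ) := by
    intro r hr hr0 htight
    set g : (Fin M ⊕ Fin N) → ℝ := fun v => match v with
      | Sum.inl i => r.1 i - φ i
      | Sum.inr j => ψ j - r.2 j with hg
    have hadj : ∀ v w, (SimpleGraph.fromRel (eqRel C φ ψ)).Adj v w → g v = g w := by
      intro v w hvw
      rcases hvw with ⟨hne, h | h⟩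
      · cases v with
        | inl i => cases w with
          | inl i' => simp [eqRel] at h
          | inr j =>
            have hij : φ i + ψ j = C i j := h
            have h' := htight i j hij
            simp only [hg]
            linarith
        | inr j => cases w <;> simp [eqRel] at h
      · cases w with
        | inl i => cases v with
          | inl i' => simp [eqRel] at h
          | inr j =>
            have hij : φ i + ψ j = C i j := h
            have h' := htight i j hij
            simp only [hg]
            linarith
        | inr j => cases v <;> simp [eqRel] at h
    have hwalk : ∀ {u v : Fin M ⊕ Fin N}
        (w : (SimpleGraph.fromRel (eqRel C φ ψ)).Walk u v), g u = g v := by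
      intro u v w
      induction w with
      | nil => rfl
      | cons h _ ih => exact (hadj _ _ h).trans ih
    have h00 : g (Sum.inl 0) = 0 := by simp [hg, hr0, h0]
    have hconst : ∀ v, g v = 0 := by
      intro v
      obtain ⟨w⟩ := hconn.preconnected (Sum.inl 0) v
      rw [← hwalk w, h00]
    have h1 : r.1 = φ := by
      funext i
      have := hconst (Sum.inl i)
      simp only [hg] at this
      linarith
    have h2 : r.2 = ψ := by
      funext j
      have := hconst (Sum.inr j)
      simp only [hg] at this
      linarith
    exact Prod.ext h1 h2
  rw [mem_extremePoints]
  refine ⟨⟨hmem, h0⟩, ?_⟩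
  rintro p ⟨hp, hp0⟩ q ⟨hq, hq0⟩ hseg
  obtain ⟨a, b, ha, hb, hab, heq⟩ := hseg
  have hφ : ∀ i, a * p.1 i + b * q.1 i = φ i := by
    intro i
    have := congrArg (fun x => x.1 i) heq
    simpa using this
  have hψ : ∀ j, a * p.2 j + b * q.2 j = ψ j := by
    intro j
    have := congrArg (fun x => x.2 j) heq
    simpa using this
  have key : ∀ i j, φ i + ψ j = C i j →
      p.1 i + p.2 j = C i j ∧ q.1 i + q.2 j = C i j := by
    intro i j hij
    have hp' := hp i j
    have hq' := hq i j
    have h1 := hφ i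
    have h2 := hψ j
    have e : a * (C i j - (p.1 i + p.2 j)) + b * (C i j - (q.1 i + q.2 j)) = 0 := by
      linear_combination (-1 : ℝ) * h1 - h2 - hij + C i j * hab
    have hp'' := mul_nonneg ha.le (sub_nonneg.mpr hp')
    have hq'' := mul_nonneg hb.le (sub_nonneg.mpr hq')
    have hXa : a * (C i j - (p.1 i + p.2 j)) = 0 := by linarith
    have hYb : b * (C i j - (q.1 i + q.2 j)) = 0 := by linarith
    have hX : C i j - (p.1 i + p.2 j) = 0 := by
      rcases mul_eq_zero.mp hXa with h | h
      · exact absurd h ha.ne'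
      · exact h
    have hY : C i j - (q.1 i + q.2 j) = 0 := by
      rcases mul_eq_zero.mp hYb with h | h
      · exact absurd h hb.ne'
      · exact h
    constructor <;> linarith
  have hpe := main p hp hp0 (fun i j h => (key i j h).1)
  have hqe := main q hq hq0 (fun i j h => (key i j h).2)
  exact ⟨hpe, hqe⟩
end

section
/- Let $C \in \mathbb{R}^{M\times N}$ and $(\phi,\psi) \in D(C) \cap \{\phi_1 = 0\}$. If the bipartite equality graph $G(\phi,\psi)$ (edge $(i,j)$ iff $\phi_i + \psi_j = C_{ij}$) is disconnected, then $(\phi,\psi)$ is not an extreme point of $D(C) \cap \{\phi_1 = 0\}$. -/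
open Filter Topology

noncomputable def shiftOutside {M N : ℕ} (S : Set (Fin M ⊕ Fin N)) : (Fin M → ℝ) × (Fin N → ℝ) :=
  (fun i => -Sᶜ.indicator 1 (Sum.inl i), fun j => Sᶜ.indicator 1 (Sum.inr j))

section shiftOutside

variable {M N : ℕ} {S : Set (Fin M ⊕ Fin N)}

lemma shiftOutside_fst_add_snd_eq_zero {i : Fin M} {j : Fin N}
    (h : Sum.inl i ∈ S ↔ Sum.inr j ∈ S) :
    (shiftOutside S).1 i + (shiftOutside S).2 j = 0 := by
  by_cases hi : Sum.inl i ∈ S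
  · simp [shiftOutside, hi, h.1 hi]
  · simp [shiftOutside, hi, (not_congr h).1 hi]

lemma shiftOutside_fst_eq_zero {i : Fin M} (h : Sum.inl i ∈ S) : (shiftOutside S).1 i = 0 := by
  simp [shiftOutside, h]

lemma shiftOutside_ne_zero {v : Fin M ⊕ Fin N} (hv : v ∉ S) : shiftOutside S ≠ 0 := by
  intro h
  rcases v with i | j
  · simpa [shiftOutside, hv] using congrFun (congrArg Prod.fst h) i
  · simpa [shiftOutside, hv] using congrFun (congrArg Prod.snd h) j

lemma eventually_add_smul_shiftOutside_mem_dualPolyhedron {C : Matrix (Fin M) (Fin N) ℝ}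
    {p : (Fin M → ℝ) × (Fin N → ℝ)} (hp : p ∈ dualPolyhedron C)
    (hS : ∀ i j, p.1 i + p.2 j = C i j → (Sum.inl i ∈ S ↔ Sum.inr j ∈ S)) :
    ∀ᶠ t in 𝓝 (0 : ℝ), p + t • shiftOutside S ∈ dualPolyhedron C := by
  simp only [dualPolyhedron, Set.mem_ofPred_eq, eventually_all]
  intro i j
  have hsum : ∀ t : ℝ, (p + t • shiftOutside S).1 i + (p + t • shiftOutside S).2 j
      = p.1 i + p.2 j + t * ((shiftOutside S).1 i + (shiftOutside S).2 j) := fun t => by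
    simp only [Prod.fst_add, Prod.snd_add, Prod.smul_fst, Prod.smul_snd, Pi.add_apply,
      Pi.smul_apply, smul_eq_mul]
    ring
  simp only [hsum]
  rcases (hp i j).lt_or_eq with hslack | htight
  · have hcont : Tendsto (fun t : ℝ => p.1 i + p.2 j
        + t * ((shiftOutside S).1 i + (shiftOutside S).2 j)) (𝓝 0) (𝓝 (p.1 i + p.2 j)) := by
      simpa using ((continuous_id.mul continuous_const).const_add (p.1 i + p.2 j)).tendsto 0
    exact (hcont.eventually (eventually_lt_nhds hslack)).mono fun _ => le_of_lt
  · exact .of_forall fun t => by simp [shiftOutside_fst_add_snd_eq_zero (hS i j htight), htight]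

end shiftOutside

lemma eq_zero_of_eventually_add_smul_mem {E : Type*} [AddCommGroup E] [Module ℝ E] {A : Set E}
    {x d : E} (hx : x ∈ A.extremePoints ℝ) (h : ∀ᶠ t in 𝓝 (0 : ℝ), x + t • d ∈ A) : d = 0 := by
  obtain ⟨ε, hε, hball⟩ := Metric.eventually_nhds_iff.1 h
  have hsmall : ∀ t : ℝ, |t| = ε / 2 → x + t • d ∈ A := fun t ht =>
    hball (by rw [Real.dist_0_eq_abs, ht]; linarith)
  have hplus := hsmall (ε / 2) (abs_of_pos (half_pos hε))
  have hminus : x - (ε / 2) • d ∈ A := by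
    simpa [sub_eq_add_neg] using hsmall (-(ε / 2)) (by rw [abs_neg, abs_of_pos (half_pos hε)])
  have hmid := hx.2 hplus hminus (mem_openSegment_add_sub x _)
  simpa [hε.ne'] using hmid

/-- If the equality graph `G(φ, ψ)` is disconnected, then `(φ, ψ)` is not an extreme point
of `D(C) ∩ {φ₁ = 0}`. -/
theorem not_extreme_of_disconnected_eqGraph {M N : ℕ} [NeZero M]
    (C : Matrix (Fin M) (Fin N) ℝ) (φ : Fin M → ℝ) (ψ : Fin N → ℝ)
    (hmem : (φ, ψ) ∈ dualPolyhedron C) (h0 : φ 0 = 0)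
    (hdisc : ¬ (SimpleGraph.fromRel (eqRel C φ ψ)).Connected) :
    (φ, ψ) ∉ (dualPolyhedron C ∩ {p | p.1 0 = 0}).extremePoints ℝ := by
  set G := SimpleGraph.fromRel (eqRel C φ ψ)
  set S := {v | G.Reachable (Sum.inl 0) v}
  have hcut : ∀ i j, φ i + ψ j = C i j → (Sum.inl i ∈ S ↔ Sum.inr j ∈ S) := fun i j h => by
    have hadj : G.Adj (Sum.inl i) (Sum.inr j) := by simp [G, eqRel, h]
    exact ⟨fun hi => hi.trans hadj.reachable, fun hj => hj.trans hadj.symm.reachable⟩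
  obtain ⟨v, hv⟩ : ∃ v, v ∉ S := by
    by_contra! hall
    exact hdisc (G.connected_iff_exists_forall_reachable.2 ⟨_, hall⟩)
  have hroot : Sum.inl 0 ∈ S := SimpleGraph.Reachable.refl _
  intro hext
  refine shiftOutside_ne_zero hv (eq_zero_of_eventually_add_smul_mem hext ?_)
  filter_upwards [eventually_add_smul_shiftOutside_mem_dualPolyhedron hmem hcut] with t ht
  exact ⟨ht, by simp [shiftOutside_fst_eq_zero hroot, h0]⟩
end

section
/- Let $X = (x_1,\dots,x_M) \in (\mathbb{R}^d)^M$, $Y = (y_1,\dots,y_N) \in (\mathbb{R}^d)^N$, $\alpha, \beta$ strictly positive probability vectors, and $c : \mathbb{R}^d \times \mathbb{R}^d \to \mathbb{R}$ continuous. Suppose $\gamma = \sum_{i,j} \hat\gamma_{ij} \delta_{(x_i, y_j)}$ is an optimal transport plan for cost $c$ between $\rho_X = \sum_i \alpha_i \delta_{x_i}$ and $\mu_Y = \sum_j \beta_j \delta_{y_j}$, and there exists a set of points $P = \{(a_i, b_i)\}_{i=1}^n \subset \mathrm{supp}\,\gamma$ with $n \geq 2$, pairwise distinct first coordinates and pairwise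 distinct second coordinates, such that $\sum_{i=1}^n (c(a_{i+1}, b_i) - c(a_i, b_i)) = 0$ (indices cyclic, $a_{n+1} = a_1$). Then the optimal plan for this transport problem is not unique. -/
open MeasureTheory ENNReal Finset

/-- The topological support of a measure: points all of whose open neighbourhoods
have positive measure. -/
def msupport {α : Type*} [TopologicalSpace α] [MeasurableSpace α] (μ : Measure α) : Set α :=
  {x | ∀ U : Set α, IsOpen U → x ∈ U → μ U ≠ 0}

/-!
Let `ε > 0` be at most the mass of `γ` at each `(aₖ, bₖ)`; these masses are positive because
`γ` is a finite sum of Dirac masses, so every point of its support is an atom. Moving mass `ε`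
from each `(aₖ, bₖ)` to `(aₖ₊₁, bₖ)` only permutes the first coordinates, so both marginals are
preserved, and it changes the cost by `ε Δ_P = 0`; hence the new plan is optimal as well. It
differs from `γ` because it removes mass at `(a₀, b₀)` and adds none there: the injectivity of
`a` and `b` and the absence of fixed points of the rotation keep the new points off `P`.
-/

open scoped NNReal

section

open Measure

lemma measure_singleton_ne_zero_of_mem_msupport {α : Type*} [TopologicalSpace α] [T1Space α]
    [MeasurableSpace α] {μ : Measure α} {S : Set α} (hS : S.Finite) (hμS : μ Sᶜ = 0) {x : α}
    (hx : x ∈ msupport μ) : μ {x} ≠ 0 := by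
  intro hx0
  refine hx (S \ {x})ᶜ (hS.sdiff.isClosed.isOpen_compl) (fun h => h.2 rfl) (measure_mono_null ?_
    (measure_union_null hμS hx0))
  intro y hy
  by_cases hyx : y = x
  · exact Or.inr hyx
  · exact Or.inl fun hyS => hy ⟨hyS, hyx⟩

lemma exists_pos_le_of_ne_zero_of_ne_top {ι : Type*} [Finite ι] [Nonempty ι] {f : ι → ℝ≥0∞}
    (h0 : ∀ i, f i ≠ 0) (htop : ∀ i, f i ≠ ∞) : ∃ ε : ℝ≥0, ε ≠ 0 ∧ ∀ i, (ε : ℝ≥0∞) ≤ f i := by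
  obtain ⟨i₀, hi₀⟩ := Finite.exists_min f
  exact ⟨(f i₀).toNNReal, (ENNReal.toNNReal_pos (h0 i₀) (htop i₀)).ne',
    fun i => (coe_toNNReal (htop i₀)).trans_le (hi₀ i)⟩

section Marginals

variable {α β ι : Type*} [MeasurableSpace α] [MeasurableSpace β] [Fintype ι]

lemma fst_sum_smul_dirac (w : ι → ℝ≥0∞) (x : ι → α) (y : ι → β) :
    (∑ k, w k • dirac (x k, y k)).fst = ∑ k, w k • dirac (x k) := by
  simp_rw [← sum_fintype, fst_sum, fst, Measure.map_smul, map_dirac' measurable_fst]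

lemma snd_sum_smul_dirac (w : ι → ℝ≥0∞) (x : ι → α) (y : ι → β) :
    (∑ k, w k • dirac (x k, y k)).snd = ∑ k, w k • dirac (y k) := by
  simp_rw [← sum_fintype, snd_sum, snd, Measure.map_smul, map_dirac' measurable_snd]

end Marginals

lemma sum_smul_dirac_le {α ι : Type*} [MeasurableSpace α] [MeasurableSingletonClass α] [Fintype ι]
    {μ : Measure α} {x : ι → α} (hx : Function.Injective x) {ε : ℝ≥0}
    (hε : ∀ k, (ε : ℝ≥0∞) ≤ μ {x k}) : ∑ k, ε • dirac (x k) ≤ μ := calc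
  ∑ k, ε • dirac (x k) ≤ ∑ k, μ {x k} • dirac (x k) := by
    refine Finset.sum_le_sum fun k _ => Measure.le_iff'.2 fun s => ?_
    rw [ENNReal.smul_def, Measure.smul_apply, Measure.smul_apply, smul_eq_mul, smul_eq_mul]
    exact mul_le_mul_left (hε k) _
  _ = μ.restrict (⋃ k, {x k}) := by
    rw [restrict_iUnion, sum_fintype]
    · simp only [restrict_singleton]
    · exact fun i j hij => Set.disjoint_singleton.2 (hx.ne hij)
    · exact fun k => measurableSet_singleton _
  _ ≤ μ := restrict_le_self

section Integral

variable {α ι : Type*} [MeasurableSpace α] [MeasurableSingletonClass α] [Fintype ι]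

lemma integrable_sum_smul_dirac {E : Type*} [NormedAddCommGroup E] (f : α → E) (w : ι → ℝ≥0)
    (x : ι → α) :
    Integrable f (∑ k, w k • dirac (x k)) :=
  integrable_finsetSum_measure.2 fun _ _ => (integrable_dirac enorm_lt_top).smul_measure_nnreal

lemma integral_sum_smul_dirac {E : Type*} [NormedAddCommGroup E] [NormedSpace ℝ E]
    [CompleteSpace E] (f : α → E) (w : ι → ℝ≥0) (x : ι → α) :
    ∫ y, f y ∂(∑ k, w k • dirac (x k)) = ∑ k, w k • f (x k) := by
  rw [integral_finsetSum_measure fun _ _ => (integrable_dirac enorm_lt_top).smul_measure_nnreal]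
  simp only [integral_smul_nnreal_measure, integral_dirac]

end Integral

section CyclicShift

variable {α β ι : Type*} [MeasurableSpace α] [MeasurableSpace β] [Fintype ι]
  (γ : Measure (α × β)) (ε : ℝ≥0) (σ : Equiv.Perm ι) (a : ι → α) (b : ι → β)

/-- The paper's `γ + ε ∑ₖ (δ_(a (σ k), b k) - δ_(a k, b k))`, written without signed measures. -/
noncomputable def cyclicShift : Measure (α × β) :=
  γ - ∑ k, ε • dirac (a k, b k) + ∑ k, ε • dirac (a (σ k), b k)

variable {γ ε σ a b}

lemma fst_cyclicShift (hle : ∑ k, ε • dirac (a k, b k) ≤ γ) :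
    (cyclicShift γ ε σ a b).fst = γ.fst := by
  have hmarg : (∑ k, ε • dirac (a (σ k), b k)).fst = (∑ k, ε • dirac (a k, b k)).fst := by
    simp only [ENNReal.smul_def, fst_sum_smul_dirac]
    exact Equiv.sum_comp σ fun k => (ε : ℝ≥0∞) • dirac (a k)
  rw [cyclicShift, fst_add, hmarg, ← fst_add, sub_add_cancel_of_le hle]

lemma snd_cyclicShift (hle : ∑ k, ε • dirac (a k, b k) ≤ γ) :
    (cyclicShift γ ε σ a b).snd = γ.snd := by
  have hmarg : (∑ k, ε • dirac (a (σ k), b k)).snd = (∑ k, ε • dirac (a k, b k)).snd := by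
    simp only [ENNReal.smul_def, snd_sum_smul_dirac]
  rw [cyclicShift, snd_add, hmarg, ← snd_add, sub_add_cancel_of_le hle]

lemma cyclicShift_ne [MeasurableSingletonClass (α × β)] [IsFiniteMeasure γ] [Nonempty ι]
    (hle : ∑ k, ε • dirac (a k, b k) ≤ γ) (hε : ε ≠ 0) (ha : Function.Injective a)
    (hb : Function.Injective b) (hσ : ∀ k, σ k ≠ k) : cyclicShift γ ε σ a b ≠ γ := by
  obtain ⟨k₀⟩ := ‹Nonempty ι›
  have hmoved : ∀ k, (a (σ k), b k) ∉ ({(a k₀, b k₀)} : Set (α × β)) := by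
    rintro k hk
    obtain ⟨hak, hbk⟩ := Prod.mk.inj hk
    obtain rfl := hb hbk
    exact hσ k (ha hak)
  have hout : (∑ k, ε • dirac (a (σ k), b k)) {(a k₀, b k₀)} = 0 := by
    simp [hmoved]
  have hin : (ε : ℝ≥0∞) ≤ (∑ k, ε • dirac (a k, b k)) {(a k₀, b k₀)} := by
    rw [finsetSum_apply]
    refine le_trans ?_ (Finset.single_le_sum (fun k _ => zero_le) (Finset.mem_univ k₀))
    simp
  intro heq
  have h := congrArg (· {(a k₀, b k₀)}) heq
  conv_rhs at h => rw [← sub_add_cancel_of_le hle]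
  simp only [cyclicShift, Measure.add_apply, hout] at h
  have hzero := ((ENNReal.add_right_inj (measure_ne_top _ _)).1 h).symm
  exact hε (by simpa [hzero] using hin)

lemma integral_cyclicShift [MeasurableSingletonClass (α × β)] (hle : ∑ k, ε • dirac (a k, b k) ≤ γ)
    {f : α × β → ℝ} (hf : Integrable f γ) :
    ∫ q, f q ∂(cyclicShift γ ε σ a b) =
      ∫ q, f q ∂γ + ε * ∑ k, (f (a (σ k), b k) - f (a k, b k)) := by
  have hrest : Integrable f (γ - ∑ k, ε • dirac (a k, b k)) := hf.mono_measure sub_le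
  conv_rhs => rw [← sub_add_cancel_of_le hle]
  rw [cyclicShift, integral_add_measure hrest (integrable_sum_smul_dirac _ _ _),
    integral_add_measure hrest (integrable_sum_smul_dirac _ _ _),
    integral_sum_smul_dirac, integral_sum_smul_dirac, Finset.mul_sum]
  simp only [NNReal.smul_def, smul_eq_mul, mul_sub, Finset.sum_sub_distrib]
  ring

end CyclicShift

end

theorem not_unique_of_zero_cm_gap_general {d M N : ℕ}
    (c : EuclideanSpace ℝ (Fin d) → EuclideanSpace ℝ (Fin d) → ℝ)
    (X : Fin M → EuclideanSpace ℝ (Fin d)) (Y : Fin N → EuclideanSpace ℝ (Fin d))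
    (γhat : Fin M → Fin N → ℝ)
    (γ : Measure (EuclideanSpace ℝ (Fin d) × EuclideanSpace ℝ (Fin d)))
    (hγdef : γ = ∑ i : Fin M, ∑ j : Fin N,
      ENNReal.ofReal (γhat i j) • Measure.dirac (X i, Y j))
    (hopt : ∀ γ' : Measure (EuclideanSpace ℝ (Fin d) × EuclideanSpace ℝ (Fin d)),
      γ'.fst = γ.fst → γ'.snd = γ.snd →
      ∫ q, c q.1 q.2 ∂γ ≤ ∫ q, c q.1 q.2 ∂γ')
    (n : ℕ) (hn : 2 ≤ n)
    (a b : Fin n → EuclideanSpace ℝ (Fin d))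
    (ha : Function.Injective a) (hb : Function.Injective b)
    (hsupp : ∀ k : Fin n, (a k, b k) ∈ msupport γ)
    (hΔ : ∑ k : Fin n, (c (a (finRotate n k)) (b k) - c (a k) (b k)) = 0) :
    ∃ γ' : Measure (EuclideanSpace ℝ (Fin d) × EuclideanSpace ℝ (Fin d)),
      γ'.fst = γ.fst ∧ γ'.snd = γ.snd ∧ γ' ≠ γ ∧
      ∀ η : Measure (EuclideanSpace ℝ (Fin d) × EuclideanSpace ℝ (Fin d)),
        η.fst = γ.fst → η.snd = γ.snd → ∫ q, c q.1 q.2 ∂γ' ≤ ∫ q, c q.1 q.2 ∂η := by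
  have hγ : γ = ∑ i, ∑ j, (γhat i j).toNNReal • Measure.dirac (X i, Y j) := hγdef
  have : IsFiniteMeasure γ := by rw [hγ]; infer_instance
  have hconc : γ (Set.range X ×ˢ Set.range Y)ᶜ = 0 := by
    rw [hγ]
    simp
  have hmass (k : Fin n) : γ {(a k, b k)} ≠ 0 :=
    measure_singleton_ne_zero_of_mem_msupport ((Set.finite_range X).prod (Set.finite_range Y))
      hconc (hsupp k)
  have : NeZero n := ⟨by omega⟩
  obtain ⟨ε, hε0, hεle⟩ := exists_pos_le_of_ne_zero_of_ne_top hmass fun k => measure_ne_top γ _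
  have hle := sum_smul_dirac_le (fun k j h => ha (congrArg Prod.fst h)) hεle
  have hcost : Integrable (fun q => c q.1 q.2) γ := by
    rw [hγ]
    exact integrable_finsetSum_measure.2 fun i _ => integrable_sum_smul_dirac _ _ _
  refine ⟨cyclicShift γ ε (finRotate n) a b, fst_cyclicShift hle, snd_cyclicShift hle,
    cyclicShift_ne hle hε0 ha hb fun k => ?_, fun η hηf hηs => ?_⟩
  · exact Equiv.Perm.mem_support.1 (by simp [support_finRotate_of_le hn])
  · rw [integral_cyclicShift hle hcost, hΔ, mul_zero, add_zero]
    exact hopt η hηf hηs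

/-- If an optimal discrete plan `γ = ∑ᵢⱼ γ̂ᵢⱼ δ_{(xᵢ, yⱼ)}` supports a distinct set of points
`P = {(aᵢ, bᵢ)}` of length `n ≥ 2` with vanishing cyclical monotonicity gap `Δ_P = 0`,
then the optimal plan is not unique. -/
theorem not_unique_of_zero_cm_gap {d M N : ℕ}
    (c : EuclideanSpace ℝ (Fin d) → EuclideanSpace ℝ (Fin d) → ℝ)
    (hc : Continuous fun p : EuclideanSpace ℝ (Fin d) × EuclideanSpace ℝ (Fin d) => c p.1 p.2)
    (X : Fin M → EuclideanSpace ℝ (Fin d)) (Y : Fin N → EuclideanSpace ℝ (Fin d))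
    (α : Fin M → ℝ) (β : Fin N → ℝ)
    (hα : ∀ i, 0 < α i) (hβ : ∀ j, 0 < β j)
    (hαs : ∑ i, α i = 1) (hβs : ∑ j, β j = 1)
    (γhat : Fin M → Fin N → ℝ) (hγhat : ∀ i j, 0 ≤ γhat i j)
    (γ : Measure (EuclideanSpace ℝ (Fin d) × EuclideanSpace ℝ (Fin d)))
    (hγdef : γ = ∑ i : Fin M, ∑ j : Fin N,
      ENNReal.ofReal (γhat i j) • Measure.dirac (X i, Y j))
    (hγf : γ.fst = ∑ i : Fin M, ENNReal.ofReal (α i) • Measure.dirac (X i))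
    (hγs : γ.snd = ∑ j : Fin N, ENNReal.ofReal (β j) • Measure.dirac (Y j))
    (hopt : ∀ γ' : Measure (EuclideanSpace ℝ (Fin d) × EuclideanSpace ℝ (Fin d)),
      γ'.fst = γ.fst → γ'.snd = γ.snd →
      ∫ q, c q.1 q.2 ∂γ ≤ ∫ q, c q.1 q.2 ∂γ')
    (n : ℕ) (hn : 2 ≤ n)
    (a b : Fin n → EuclideanSpace ℝ (Fin d))
    (ha : Function.Injective a) (hb : Function.Injective b)
    (hsupp : ∀ k : Fin n, (a k, b k) ∈ msupport γ)
    (hΔ : ∑ k : Fin n, (c (a (finRotate n k)) (b k) - c (a k) (b k)) = 0) :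
    ∃ γ' : Measure (EuclideanSpace ℝ (Fin d) × EuclideanSpace ℝ (Fin d)),
      γ'.fst = γ.fst ∧ γ'.snd = γ.snd ∧ γ' ≠ γ ∧
      ∀ η : Measure (EuclideanSpace ℝ (Fin d) × EuclideanSpace ℝ (Fin d)),
        η.fst = γ.fst → η.snd = γ.snd → ∫ q, c q.1 q.2 ∂γ' ≤ ∫ q, c q.1 q.2 ∂η :=
  not_unique_of_zero_cm_gap_general c X Y γhat γ hγdef hopt n hn a b ha hb hsupp hΔ
end

section
/- Let $c(x,y) = \|x - y\|^p$ on $\mathbb{R}^d$ with $p > 1$. Let $(x_0, x_1)$ and $(z_0, z_1)$ be two pairs of points satisfying the two-point cyclical monotonicity inequality $\|x_0 - x_1\|^p + \|z_0 - z_1\|^p \leq \|z_1 - x_0\|^p + \|z_0 - x_1\|^p$. If there exists $t \in (0,1)$ such that $(1-t)x_0 + t x_1 = (1-t) z_0 + t z_1$, then $x_0 = z_0$ and $x_1 = z_1$. -/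
/-- Non-crossing of `p`-cost geodesic interpolations: if two pairs of points satisfy the
two-point cyclical monotonicity inequality for the cost `‖x - y‖^p` with `p > 1` and their
straight-line interpolations meet at some interior time `t ∈ (0, 1)`, then the pairs coincide. -/
theorem noncrossing_of_p_monotone {d : ℕ} (p : ℝ) (hp : 1 < p)
    (x₀ x₁ z₀ z₁ : EuclideanSpace ℝ (Fin d))
    (hmono : ‖x₀ - x₁‖ ^ p + ‖z₀ - z₁‖ ^ p ≤ ‖z₁ - x₀‖ ^ p + ‖z₀ - x₁‖ ^ p)
    (hcross : ∃ t ∈ Set.Ioo (0 : ℝ) 1,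
      (1 - t) • x₀ + t • x₁ = (1 - t) • z₀ + t • z₁) :
    x₀ = z₀ ∧ x₁ = z₁ := by
  obtain ⟨t, ⟨ht0, ht1⟩, heq⟩ := hcross
  have hs : (0 : ℝ) < 1 - t := by linarith
  -- velocities
  have key : ∀ u u' : EuclideanSpace ℝ (Fin d), u ≠ u' → ∀ a b : ℝ, 0 < a → 0 < b →
      a + b = 1 → ‖a • u + b • u'‖ ^ p < a * ‖u‖ ^ p + b * ‖u'‖ ^ p := by
    intro u u' hne a b ha hb hab
    by_cases hn : ‖u‖ = ‖u'‖
    · have hlt : ‖a • u + b • u'‖ < ‖u‖ :=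
        norm_combo_lt_of_ne le_rfl hn.ge hne ha hb hab
      calc ‖a • u + b • u'‖ ^ p < ‖u‖ ^ p :=
            Real.rpow_lt_rpow (norm_nonneg _) hlt (by linarith)
        _ = a * ‖u‖ ^ p + b * ‖u'‖ ^ p := by
            rw [← hn]; linear_combination (-‖u‖ ^ p) * hab
    · have tri : ‖a • u + b • u'‖ ≤ a * ‖u‖ + b * ‖u'‖ := by
        calc ‖a • u + b • u'‖ ≤ ‖a • u‖ + ‖b • u'‖ := norm_add_le _ _
          _ = a * ‖u‖ + b * ‖u'‖ := by
              rw [norm_smul, norm_smul, Real.norm_of_nonneg ha.le, Real.norm_of_nonneg hb.le]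
      have h1 : ‖a • u + b • u'‖ ^ p ≤ (a * ‖u‖ + b * ‖u'‖) ^ p :=
        Real.rpow_le_rpow (norm_nonneg _) tri (by linarith)
      have h2 := (strictConvexOn_rpow hp).2 (Set.mem_Ici.mpr (norm_nonneg u))
        (Set.mem_Ici.mpr (norm_nonneg u')) hn ha hb hab
      simp only [smul_eq_mul] at h2
      exact h1.trans_lt h2
  have e1 : z₁ - x₀ = t • (x₁ - x₀) + (1 - t) • (z₁ - z₀) := by
    linear_combination (norm := module) -heq
  have e2 : z₀ - x₁ = -((1 - t) • (x₁ - x₀) + t • (z₁ - z₀)) := by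
    linear_combination (norm := module) -heq
  have hvw : x₁ - x₀ = z₁ - z₀ := by
    by_contra hne
    have A := key (x₁ - x₀) (z₁ - z₀) hne t (1 - t) ht0 hs (by ring)
    have B := key (z₁ - z₀) (x₁ - x₀) (Ne.symm hne) t (1 - t) ht0 hs (by ring)
    have n1 : ‖x₀ - x₁‖ = ‖x₁ - x₀‖ := norm_sub_rev _ _
    have n2 : ‖z₀ - z₁‖ = ‖z₁ - z₀‖ := norm_sub_rev _ _
    have n3 : ‖z₁ - x₀‖ = ‖t • (x₁ - x₀) + (1 - t) • (z₁ - z₀)‖ := by rw [e1]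
    have n4 : ‖z₀ - x₁‖ = ‖t • (z₁ - z₀) + (1 - t) • (x₁ - x₀)‖ := by
      rw [e2, norm_neg, add_comm]
    rw [n1, n2, n3, n4] at hmono
    linarith
  constructor
  · linear_combination (norm := module) heq - t • hvw
  · linear_combination (norm := module) heq + (1 - t) • hvw
end

section
/- Let $X \in (\mathbb{R}^d)^M$, $Y \in (\mathbb{R}^d)^N$, with discrete measures $\rho_X = \sum_i \alpha_i \delta_{x_i}$, $\mu_Y = \sum_j \beta_j \delta_{y_j}$ ($\alpha, \beta$ strictly positive probability vectors). For $\phi \in \mathbb{R}^M$, define the Laguerre cell $\mathrm{Lag}_i(\phi) = \{y \in \mathbb{R}^d : \langle y, x_i\rangle - \phi_i \geq \langle y, x_j\rangle - \phi_j \ \forall j\}$, and let $S_i \subset \{y_1,\dots,y_N\}$ be the set of points $y$ such that $(x_i, y)$ is in the support of some optimal plan for cost $c(x,y) = -\langle x, y\rangle$ between $\rho_X$ and $\mu_Y$. Then $\phi \in \mathbb{R}^M$ is a maximizer of the semi-discrete dual functional $\phi \mapsto -\langle \phi, \alpha\rangle - \int \phi^*(y)\, d\mu_Y(y)$ (equivalently,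 is an optimal dual potential) if and only if for all $i, j \in \{1,\dots,M\}$: $\phi_i - \phi_j \leq \inf_{y \in S_i} \langle x_i - x_j, y\rangle$. -/
open Finset

/-- The transport polytope `Π(α, β)` of matrices with nonnegative entries and
marginals `α`, `β`. -/
def transportPolytope {M N : ℕ} (α : Fin M → ℝ) (β : Fin N → ℝ) :
    Set (Matrix (Fin M) (Fin N) ℝ) :=
  {γ | (∀ i j, 0 ≤ γ i j) ∧ (∀ j, ∑ i, γ i j = β j) ∧ (∀ i, ∑ j, γ i j = α i)}

/-- An optimal discrete plan for the cost `c(x, y) = -⟨x, y⟩`. -/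
def IsOptimalDiscretePlan {d M N : ℕ} (X : Fin M → EuclideanSpace ℝ (Fin d))
    (Y : Fin N → EuclideanSpace ℝ (Fin d)) (α : Fin M → ℝ) (β : Fin N → ℝ)
    (γ : Matrix (Fin M) (Fin N) ℝ) : Prop :=
  γ ∈ transportPolytope α β ∧
    ∀ γ' ∈ transportPolytope α β,
      ∑ i, ∑ j, γ i j * -((inner ℝ (X i) (Y j) : ℝ))
        ≤ ∑ i, ∑ j, γ' i j * -((inner ℝ (X i) (Y j) : ℝ))

/-!
Weak duality `dualValue C α β φ ≤ transportCost C γ` holds for every plan `γ`, with equality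
exactly when every `y_j` to which `γ` sends mass from `x_i` lies in the Laguerre cell of `i`
(complementary slackness). Since an optimal plan exists by compactness, the Laguerre condition
forces `φ` to be a maximiser. Conversely, the support of an optimal plan `γ` is cyclically
monotone (otherwise shifting mass along a cycle lowers the cost), so the weights
`w u v = min_{j ∈ supp γ_v} (C u j - C v j)` admit no negative cycle, and shortest-path
distances for `w` give a potential `ψ` attaining equality with `γ`. A maximiser `φ` is squeezed
between the dual value of `ψ` and the cost of `γ`, so it attains equality too.
-/

section Potential

variable {ι : Type*} (w : ι → ι → ℝ)

def pathWeight {n : ℕ} (v : Fin (n + 1) → ι) : ℝ :=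
  ∑ t : Fin n, w (v t.castSucc) (v t.succ)

theorem sum_finRotate_eq_pathWeight_add {n : ℕ} (v : Fin (n + 1) → ι) :
    ∑ t, w (v t) (v (finRotate (n + 1) t)) = pathWeight w v + w (v (Fin.last n)) (v 0) := by
  simp [Fin.sum_univ_castSucc, finRotate_apply, Fin.coeSucc_eq_succ, pathWeight]

theorem pathWeight_snoc {n : ℕ} (v : Fin (n + 1) → ι) (u : ι) :
    pathWeight w (Fin.snoc v u : Fin (n + 2) → ι) = pathWeight w v + w (v (Fin.last n)) u := by
  simp [pathWeight, Fin.sum_univ_castSucc, ← Fin.castSucc_succ]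

theorem exists_potential_of_cycle_nonneg [Fintype ι]
    (hcyc : ∀ n (v : Fin (n + 1) → ι), 0 ≤ ∑ t, w (v t) (v (finRotate (n + 1) t))) :
    ∃ φ : ι → ℝ, ∀ u u', φ u' ≤ φ u + w u u' := by
  let T : ι → Set ℝ := fun u =>
    {c | ∃ n, ∃ v : Fin (n + 1) → ι, v (Fin.last n) = u ∧ pathWeight w v = c}
  have hne : ∀ u, (T u).Nonempty := fun u => ⟨_, 0, fun _ => u, rfl, rfl⟩
  have hbdd : ∀ u, BddBelow (T u) := by
    refine fun u => ⟨-univ.sup' ⟨u, mem_univ u⟩ (w u), ?_⟩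
    rintro _ ⟨n, v, rfl, rfl⟩
    have hv := sum_finRotate_eq_pathWeight_add w v ▸ hcyc n v
    linarith [le_sup' (w (v (Fin.last n))) (mem_univ (v 0))]
  refine ⟨fun u => sInf (T u), fun u u' => ?_⟩
  rw [← sub_le_iff_le_add]
  refine le_csInf (hne u) ?_
  rintro _ ⟨n, v, rfl, rfl⟩
  rw [sub_le_iff_le_add, ← pathWeight_snoc]
  exact csInf_le (hbdd u') ⟨n + 1, Fin.snoc v u', by simp, rfl⟩

end Potential

section Transport

variable {M N : ℕ}

def transportCost (C γ : Matrix (Fin M) (Fin N) ℝ) : ℝ := ∑ i, ∑ j, γ i j * C i j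

def IsOptimalPlan (C : Matrix (Fin M) (Fin N) ℝ) (α : Fin M → ℝ) (β : Fin N → ℝ)
    (γ : Matrix (Fin M) (Fin N) ℝ) : Prop :=
  γ ∈ transportPolytope α β ∧ ∀ γ' ∈ transportPolytope α β, transportCost C γ ≤ transportCost C γ'

/-- For `C i j = -⟪x_i, y_j⟫` this is the discrete Legendre transform `φ^*(y_j)`. -/
noncomputable def cTransform (C : Matrix (Fin M) (Fin N) ℝ) (φ : Fin M → ℝ) (j : Fin N) : ℝ :=
  ⨆ i, -C i j - φ i

noncomputable def dualValue (C : Matrix (Fin M) (Fin N) ℝ) (α : Fin M → ℝ) (β : Fin N → ℝ)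
    (φ : Fin M → ℝ) : ℝ :=
  -(∑ i, α i * φ i) - ∑ j, β j * cTransform C φ j

/-- The indices `j` with `y_j ∈ Lag_i(φ)`. -/
def laguerreCell (C : Matrix (Fin M) (Fin N) ℝ) (φ : Fin M → ℝ) (i : Fin M) : Set (Fin N) :=
  {j | ∀ i', -C i' j - φ i' ≤ -C i j - φ i}

variable {C γ : Matrix (Fin M) (Fin N) ℝ} {α : Fin M → ℝ} {β : Fin N → ℝ}

section Duality

theorem sum_mul_add_of_mem_transportPolytope (hγ : γ ∈ transportPolytope α β)
    (u : Fin M → ℝ) (v : Fin N → ℝ) :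
    ∑ i, ∑ j, γ i j * (u i + v j) = ∑ i, α i * u i + ∑ j, β j * v j := by
  obtain ⟨-, hcol, hrow⟩ := hγ
  simp only [mul_add, sum_add_distrib, ← sum_mul, hrow]
  rw [sum_comm]
  simp only [← sum_mul, hcol]

theorem le_cTransform (C : Matrix (Fin M) (Fin N) ℝ) (φ : Fin M → ℝ) (i : Fin M) (j : Fin N) :
    -C i j - φ i ≤ cTransform C φ j :=
  Finite.le_ciSup (fun i => -C i j - φ i) i

theorem cTransform_eq_iff_mem_laguerreCell [Nonempty (Fin M)] {φ : Fin M → ℝ} {i : Fin M}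
    {j : Fin N} : cTransform C φ j = -C i j - φ i ↔ j ∈ laguerreCell C φ i := by
  refine ⟨fun h i' => h ▸ le_cTransform C φ i' j, fun h => ?_⟩
  exact le_antisymm (ciSup_le h) (le_cTransform C φ i j)

theorem transportCost_sub_dualValue (hγ : γ ∈ transportPolytope α β) (φ : Fin M → ℝ) :
    transportCost C γ - dualValue C α β φ
      = ∑ i, ∑ j, γ i j * (C i j + φ i + cTransform C φ j) := by
  have h := sum_mul_add_of_mem_transportPolytope hγ φ (cTransform C φ)
  simp only [transportCost, dualValue, add_assoc, mul_add, sum_add_distrib] at h ⊢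
  linarith

theorem dualValue_le_transportCost (hγ : γ ∈ transportPolytope α β) (φ : Fin M → ℝ) :
    dualValue C α β φ ≤ transportCost C γ := by
  rw [← sub_nonneg, transportCost_sub_dualValue hγ]
  exact sum_nonneg fun i _ => sum_nonneg fun j _ =>
    mul_nonneg (hγ.1 i j) (by linarith [le_cTransform C φ i j])

theorem dualValue_eq_transportCost_iff [Nonempty (Fin M)] (hγ : γ ∈ transportPolytope α β)
    (φ : Fin M → ℝ) :
    dualValue C α β φ = transportCost C γ ↔ ∀ i j, 0 < γ i j → j ∈ laguerreCell C φ i := by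
  have hgap : ∀ i j, 0 ≤ C i j + φ i + cTransform C φ j := fun i j => by
    linarith [le_cTransform C φ i j]
  have hterm : ∀ i j, 0 ≤ γ i j * (C i j + φ i + cTransform C φ j) := fun i j =>
    mul_nonneg (hγ.1 i j) (hgap i j)
  rw [eq_comm, ← sub_eq_zero, transportCost_sub_dualValue hγ,
    Fintype.sum_eq_zero_iff_of_nonneg fun i => sum_nonneg fun j _ => hterm i j]
  refine funext_iff.trans (forall_congr' fun i => ?_)
  rw [Pi.zero_apply, Fintype.sum_eq_zero_iff_of_nonneg (hterm i)]
  refine funext_iff.trans (forall_congr' fun j => ?_)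
  rw [Pi.zero_apply, mul_eq_zero, ← cTransform_eq_iff_mem_laguerreCell]
  constructor
  · rintro (h | h) hpos
    · exact absurd h hpos.ne'
    · linarith
  · intro h
    rcases (hγ.1 i j).eq_or_lt with h0 | h0
    · exact Or.inl h0.symm
    · exact Or.inr (by linarith [h h0])

end Duality

section Existence

theorem transportPolytope_nonempty (hα : ∀ i, 0 ≤ α i) (hβ : ∀ j, 0 ≤ β j)
    (hαs : ∑ i, α i = 1) (hβs : ∑ j, β j = 1) : (transportPolytope α β).Nonempty :=
  ⟨fun i j => α i * β j, fun i j => mul_nonneg (hα i) (hβ j),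
    fun j => by rw [← sum_mul, hαs, one_mul], fun i => by rw [← mul_sum, hβs, mul_one]⟩

theorem isClosed_transportPolytope : IsClosed (transportPolytope α β) := by
  simp only [transportPolytope, Set.ofPred_and, Set.ofPred_forall]
  refine .inter (isClosed_iInter fun i => isClosed_iInter fun j => ?_)
    (.inter (isClosed_iInter fun j => ?_) (isClosed_iInter fun i => ?_))
  exacts [isClosed_le continuous_const (by fun_prop), isClosed_eq (by fun_prop) continuous_const,
    isClosed_eq (by fun_prop) continuous_const]

theorem isCompact_transportPolytope : IsCompact (transportPolytope α β) := by
  refine (isCompact_Icc (a := (0 : Fin M → Fin N → ℝ)) (b := fun i _ => α i)).of_isClosed_subset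
    isClosed_transportPolytope ?_
  rintro γ ⟨hnn, -, hrow⟩
  exact ⟨fun i j => hnn i j,
    fun i j => (hrow i).le.trans' (single_le_sum (fun j _ => hnn i j) (mem_univ j))⟩

theorem exists_isOptimalPlan (C : Matrix (Fin M) (Fin N) ℝ)
    (hne : (transportPolytope α β).Nonempty) :
    ∃ γ, IsOptimalPlan C α β γ := by
  obtain ⟨γ, hγ, hmin⟩ := isCompact_transportPolytope.exists_isMinOn hne
    (by unfold transportCost; fun_prop : Continuous fun γ => transportCost C γ).continuousOn
  exact ⟨γ, hγ, hmin⟩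

end Existence

section CyclicalMonotonicity

variable {κ : Type*} [Fintype κ]

def pairCount (I : κ → Fin M) (J : κ → Fin N) : Matrix (Fin M) (Fin N) ℝ :=
  fun i j => ∑ t, if I t = i ∧ J t = j then 1 else 0

theorem pairCount_nonneg (I : κ → Fin M) (J : κ → Fin N) (i : Fin M) (j : Fin N) :
    0 ≤ pairCount I J i j :=
  sum_nonneg fun t _ => by split_ifs <;> norm_num

theorem sum_pairCount_row (I : κ → Fin M) (J : κ → Fin N) (i : Fin M) :
    ∑ j, pairCount I J i j = ∑ t, if I t = i then 1 else 0 := by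
  simp only [pairCount]
  rw [sum_comm]
  simp [ite_and]

theorem sum_pairCount_col (I : κ → Fin M) (J : κ → Fin N) (j : Fin N) :
    ∑ i, pairCount I J i j = ∑ t, if J t = j then 1 else 0 := by
  simp only [pairCount]
  rw [sum_comm]
  simp [ite_and]

theorem transportCost_pairCount (C : Matrix (Fin M) (Fin N) ℝ) (I : κ → Fin M) (J : κ → Fin N) :
    transportCost C (pairCount I J) = ∑ t, C (I t) (J t) := by
  simp only [transportCost, pairCount, sum_mul, ite_mul, one_mul, zero_mul]
  rw [sum_congr rfl fun i _ => sum_comm, sum_comm]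
  simp [ite_and]

theorem div_card_mul_pairCount_le (hγ : ∀ i j, 0 ≤ γ i j)
    {I : κ → Fin M} {J : κ → Fin N} {m : ℝ} (hm : ∀ t, m ≤ γ (I t) (J t)) (i : Fin M) (j : Fin N) :
    m / Fintype.card κ * pairCount I J i j ≤ γ i j := by
  rcases isEmpty_or_nonempty κ with hκ | hκ
  · simp [pairCount, hγ i j]
  have hcard : (0 : ℝ) < Fintype.card κ := by exact_mod_cast Fintype.card_pos
  calc m / Fintype.card κ * pairCount I J i j
      = ∑ t, if I t = i ∧ J t = j then m / Fintype.card κ else 0 := by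
        simp only [pairCount, mul_sum, mul_ite, mul_one, mul_zero]
    _ ≤ ∑ _t : κ, γ i j / Fintype.card κ := by
        refine sum_le_sum fun t _ => ?_
        split_ifs with h
        · obtain ⟨rfl, rfl⟩ := h
          exact div_le_div_of_nonneg_right (hm t) hcard.le
        · exact div_nonneg (hγ i j) hcard.le
    _ = γ i j := by
        rw [sum_const, card_univ, nsmul_eq_mul, mul_div_cancel₀ _ hcard.ne']

theorem IsOptimalPlan.sum_le_sum_comp_perm (hγ : IsOptimalPlan C α β γ) (I : κ → Fin M)
    (J : κ → Fin N) (σ : Equiv.Perm κ) (hpos : ∀ t, 0 < γ (I t) (J t)) :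
    ∑ t, C (I t) (J t) ≤ ∑ t, C (I t) (J (σ t)) := by
  rcases isEmpty_or_nonempty κ with hκ | hκ
  · simp
  obtain ⟨t₀, -, hmin⟩ := exists_min_image univ (fun t => γ (I t) (J t)) univ_nonempty
  set ε := γ (I t₀) (J t₀) / Fintype.card κ
  have hε : 0 < ε := div_pos (hpos t₀) (by exact_mod_cast Fintype.card_pos)
  set γ' : Matrix (Fin M) (Fin N) ℝ :=
    fun i j => γ i j + ε * (pairCount I (J ∘ σ) i j - pairCount I J i j)
  obtain ⟨hnn, hcol, hrow⟩ := hγ.1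
  have hγ' : γ' ∈ transportPolytope α β := by
    refine ⟨fun i j => ?_, fun j => ?_, fun i => ?_⟩
    · have := div_card_mul_pairCount_le hnn (fun t => hmin t (mem_univ t)) i j
      have := mul_nonneg hε.le (pairCount_nonneg I (J ∘ σ) i j)
      simp only [γ']
      linarith
    · simp only [γ', sum_add_distrib, ← mul_sum, sum_sub_distrib, sum_pairCount_col, hcol,
        Function.comp_apply, Equiv.sum_comp σ (fun t => if J t = j then (1 : ℝ) else 0), sub_self,
        mul_zero, add_zero]
    · simp only [γ', sum_add_distrib, ← mul_sum, sum_sub_distrib, sum_pairCount_row, hrow, sub_self,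
        mul_zero, add_zero]
  have hcost : transportCost C γ' = transportCost C γ
      + ε * (transportCost C (pairCount I (J ∘ σ)) - transportCost C (pairCount I J)) := by
    simp only [transportCost, γ', add_mul, sub_mul, mul_assoc, sum_add_distrib, sum_sub_distrib,
      ← mul_sum]
  have := hγ.2 γ' hγ'
  rw [hcost, le_add_iff_nonneg_right, mul_nonneg_iff_of_pos_left hε, sub_nonneg,
    transportCost_pairCount, transportCost_pairCount] at this
  exact this

end CyclicalMonotonicity

theorem IsOptimalPlan.exists_potential (hγ : IsOptimalPlan C α β γ) (hα : ∀ i, 0 < α i) :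
    ∃ ψ : Fin M → ℝ, ∀ i j, 0 < γ i j → j ∈ laguerreCell C ψ i := by
  classical
  let supp : Fin M → Finset (Fin N) := fun i => univ.filter (0 < γ i ·)
  have hsupp : ∀ i, (supp i).Nonempty := by
    intro i
    have hpos : ∑ _j : Fin N, (0 : ℝ) < ∑ j, γ i j := by simpa [hγ.1.2.2 i] using hα i
    obtain ⟨j, -, hj⟩ := exists_lt_of_sum_lt hpos
    exact ⟨j, mem_filter.2 ⟨mem_univ j, hj⟩⟩
  let w : Fin M → Fin M → ℝ := fun u v => (supp v).inf' (hsupp v) fun j => C u j - C v j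
  obtain ⟨ψ, hψ⟩ := exists_potential_of_cycle_nonneg w fun n v => by
    set ρ := finRotate (n + 1)
    choose j hj hjw using fun t =>
      exists_mem_eq_inf' (hsupp (v (ρ t))) fun j => C (v t) j - C (v (ρ t)) j
    have hmono :=
      hγ.sum_le_sum_comp_perm (fun t => v (ρ t)) j ρ fun t => (mem_filter.1 (hj t)).2
    rw [Equiv.sum_comp ρ fun t => C (v t) (j t)] at hmono
    simp only [w, hjw, sum_sub_distrib, sub_nonneg]
    exact hmono
  refine ⟨ψ, fun i j hij i' => ?_⟩
  have hw : w i' i ≤ C i' j - C i j := inf'_le _ (mem_filter.2 ⟨mem_univ j, hij⟩)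
  linarith [hψ i' i]

theorem forall_dualValue_le_iff [Nonempty (Fin M)] (hα : ∀ i, 0 < α i)
    (hne : (transportPolytope α β).Nonempty) (φ : Fin M → ℝ) :
    (∀ φ', dualValue C α β φ' ≤ dualValue C α β φ) ↔
      ∀ i j, (∃ γ, IsOptimalPlan C α β γ ∧ 0 < γ i j) → j ∈ laguerreCell C φ i := by
  constructor
  · rintro hmax i j ⟨γ, hγ, hij⟩
    obtain ⟨ψ, hψ⟩ := hγ.exists_potential hα
    have hψγ := (dualValue_eq_transportCost_iff hγ.1 ψ).2 hψ
    have hφγ : dualValue C α β φ = transportCost C γ :=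
      le_antisymm (dualValue_le_transportCost hγ.1 φ) (hψγ ▸ hmax ψ)
    exact (dualValue_eq_transportCost_iff hγ.1 φ).1 hφγ i j hij
  · intro h φ'
    obtain ⟨γ, hγ⟩ := exists_isOptimalPlan C hne
    rw [(dualValue_eq_transportCost_iff hγ.1 φ).2 fun i j hij => h i j ⟨γ, hγ, hij⟩]
    exact dualValue_le_transportCost hγ.1 φ'

end Transport

theorem semidiscrete_dual_characterisation_general {d M N : ℕ} (hM : 0 < M)
    (X : Fin M → EuclideanSpace ℝ (Fin d)) (Y : Fin N → EuclideanSpace ℝ (Fin d))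
    (α : Fin M → ℝ) (β : Fin N → ℝ)
    (hα : ∀ i, 0 < α i) (hβ : ∀ j, 0 < β j)
    (hαs : ∑ i, α i = 1) (hβs : ∑ j, β j = 1)
    (φ : Fin M → ℝ) :
    (∀ φ' : Fin M → ℝ,
        -(∑ i, α i * φ' i) - ∑ j, β j * (⨆ i, ((inner ℝ (Y j) (X i) : ℝ) - φ' i))
          ≤ -(∑ i, α i * φ i) - ∑ j, β j * (⨆ i, ((inner ℝ (Y j) (X i) : ℝ) - φ i)))
      ↔ ∀ i i' : Fin M, ∀ j : Fin N,
          (∃ γ : Matrix (Fin M) (Fin N) ℝ,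
            IsOptimalDiscretePlan X Y α β γ ∧ 0 < γ i j) →
          φ i - φ i' ≤ (inner ℝ (X i - X i') (Y j) : ℝ) := by
  have : Nonempty (Fin M) := Fin.pos_iff_nonempty.mp hM
  let C : Matrix (Fin M) (Fin N) ℝ := fun i j => -inner ℝ (X i) (Y j)
  have hdual (ψ : Fin M → ℝ) : dualValue C α β ψ
      = -(∑ i, α i * ψ i) - ∑ j, β j * ⨆ i, (inner ℝ (Y j) (X i) - ψ i) := by
    simp [dualValue, cTransform, C, real_inner_comm]
  have hcell (i i' : Fin M) (j : Fin N) :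
      (-C i' j - φ i' ≤ -C i j - φ i) ↔ φ i - φ i' ≤ inner ℝ (X i - X i') (Y j) := by
    simp only [C, neg_neg, inner_sub_left]
    constructor <;> intro h <;> linarith
  have hne := transportPolytope_nonempty (fun i => (hα i).le) (fun j => (hβ j).le) hαs hβs
  simp only [← hdual, forall_dualValue_le_iff (C := C) hα hne φ]
  exact ⟨fun h i i' j hγ => (hcell i i' j).1 (h i j hγ i'),
    fun h i j hγ i' => (hcell i i' j).2 (h i i' j hγ)⟩

/-- Characterisation of semi-discrete optimal dual vectors: `φ ∈ ℝ^M` maximises the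
semi-discrete dual functional iff `φ i - φ i' ≤ ⟨x_i - x_{i'}, y⟩` for every `y ∈ S_i`,
where `S_i` collects points `y_j` paired with `x_i` by some optimal plan. -/
theorem semidiscrete_dual_characterisation {d M N : ℕ} (hM : 0 < M) (hN : 0 < N)
    (X : Fin M → EuclideanSpace ℝ (Fin d)) (Y : Fin N → EuclideanSpace ℝ (Fin d))
    (α : Fin M → ℝ) (β : Fin N → ℝ)
    (hα : ∀ i, 0 < α i) (hβ : ∀ j, 0 < β j)
    (hαs : ∑ i, α i = 1) (hβs : ∑ j, β j = 1)
    (φ : Fin M → ℝ) :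
    (∀ φ' : Fin M → ℝ,
        -(∑ i, α i * φ' i) - ∑ j, β j * (⨆ i, ((inner ℝ (Y j) (X i) : ℝ) - φ' i))
          ≤ -(∑ i, α i * φ i) - ∑ j, β j * (⨆ i, ((inner ℝ (Y j) (X i) : ℝ) - φ i)))
      ↔ ∀ i i' : Fin M, ∀ j : Fin N,
          (∃ γ : Matrix (Fin M) (Fin N) ℝ,
            IsOptimalDiscretePlan X Y α β γ ∧ 0 < γ i j) →
          φ i - φ i' ≤ (inner ℝ (X i - X i') (Y j) : ℝ) :=
  semidiscrete_dual_characterisation_general hM X Y α β hα hβ hαs hβs φ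
end

section
/- Let $\rho, \mu$ be compactly supported probability measures on $\mathbb{R}^d$ and suppose the quadratic-cost ($c(x,y)=\|x-y\|^2$) optimal transport from $\rho$ to each of $\mu_0$ and $\mu_1$ is given by maps $T_0$ and $T_1$. For $\varepsilon > 0$ define $c_\varepsilon((x_0,y_0),(x_1,y_1)) = \|x_0 - x_1\|^2 + \varepsilon\|y_0 - y_1\|^2$ and let $\tau_{c_\varepsilon}(\gamma_0,\gamma_1)$ be the optimal transport cost between $\gamma_i = (\mathrm{id}, T_i)_\#\rho$ for cost $c_\varepsilon$. Then $\frac{1}{\varepsilon}\tau_{c_\varepsilon}(\gamma_0, \gamma_1) \to \|T_0 - T_1\|_{L^2(\rho)}^2$ as $\varepsilon \to 0$. -/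
/-!
The diagonal coupling `x ↦ ((x, T₀ x), (x, T₁ x))` has cost `ε ‖T₀ - T₁‖²_{L²(ρ)}`.
Conversely, in any coupling `η` of `γ₀` and `γ₁` the fibre points are `η`-a.s. `T₀ X` and
`T₁ X'`, where the base points `X`, `X'` both have law `ρ`; so the cost is
`‖X - X'‖² + ε ‖T₀ X - T₁ X'‖²` in `L²(η)`. Approximating `T₁` in `L²(ρ)` by a continuous
compactly supported `g`, for which `dist (g x) (g x') ≤ θ + K dist x x'`, gives
`‖T₀ - T₁‖_{L²(ρ)} ≤ ‖T₀ X - T₁ X'‖_{L²(η)} + δ + K ‖X - X'‖_{L²(η)}` with `K` independent of `η`.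
So either `‖X - X'‖ > δ / K`, and then `‖X - X'‖²` alone exceeds `ε ‖T₀ - T₁‖²` for small `ε`,
or `‖T₀ X - T₁ X'‖ ≥ ‖T₀ - T₁‖ - 2δ`.
-/

open MeasureTheory ENNReal Filter

/-- The `c_ε`-transport cost between the plans `γ₀ = (id, T₀)_# ρ` and `γ₁ = (id, T₁)_# ρ`,
for `c_ε((x₀,y₀),(x₁,y₁)) = ‖x₀ - x₁‖² + ε ‖y₀ - y₁‖²`. -/
noncomputable def tauEps {d : ℕ} (ρ : Measure (EuclideanSpace ℝ (Fin d)))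
    (T₀ T₁ : EuclideanSpace ℝ (Fin d) → EuclideanSpace ℝ (Fin d)) (ε : ℝ) : ℝ≥0∞ :=
  ⨅ η ∈ {η : Measure ((EuclideanSpace ℝ (Fin d) × EuclideanSpace ℝ (Fin d)) ×
      (EuclideanSpace ℝ (Fin d) × EuclideanSpace ℝ (Fin d))) |
      η.fst = Measure.map (fun x => (x, T₀ x)) ρ ∧
      η.snd = Measure.map (fun x => (x, T₁ x)) ρ},
    ∫⁻ q, ENNReal.ofReal (dist q.1.1 q.2.1 ^ 2 + ε * dist q.1.2 q.2.2 ^ 2) ∂η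

open scoped NNReal Topology

lemma msupport_eq_support {α : Type*} [TopologicalSpace α] [MeasurableSpace α] (μ : Measure α) :
    msupport μ = μ.support := by
  ext x
  rw [(nhds_basis_opens x).mem_measureSupport]
  simp only [msupport, Set.mem_ofPred_eq, pos_iff_ne_zero, and_imp]
  exact forall_congr' fun _ => forall_comm

lemma memLp_of_map_eq_of_isCompact_msupport {α β : Type*} [MeasurableSpace α]
    [NormedAddCommGroup β] [MeasurableSpace β] [BorelSpace β] [SecondCountableTopology β]
    {ρ : Measure α} [IsFiniteMeasure ρ] {μ : Measure β} {T : α → β} (hT : Measurable T)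
    (hTμ : ρ.map T = μ) (hμ : IsCompact (msupport μ)) (p : ℝ≥0∞) : MemLp T p ρ := by
  obtain ⟨R, hR⟩ := hμ.isBounded.exists_norm_le
  have hae : ∀ᵐ x ∂ρ, T x ∈ msupport μ :=
    ae_of_ae_map hT.aemeasurable (by rw [hTμ, msupport_eq_support]; exact Measure.support_mem_ae)
  exact MemLp.of_bound hT.aestronglyMeasurable R (hae.mono fun x hx => hR _ hx)

section Coupling

variable {α β : Type*} [MeasurableSpace α] [MeasurableSpace β]
  {ρ : Measure α} {T₀ T₁ : α → β} {η : Measure ((α × β) × (α × β))}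

lemma ae_snd_eq_of_map_graph [MeasurableEq β] {T : α → β} (hT : Measurable T) :
    ∀ᵐ p ∂ρ.map (fun x => (x, T x)), p.2 = T p.1 :=
  (ae_map_iff (measurable_id.prodMk hT).aemeasurable
    (measurableSet_eq_fun measurable_snd (hT.comp measurable_fst))).2 (ae_of_all _ fun _ => rfl)

lemma map_fst_fst_eq_of_fst_eq_graph (hT₀ : Measurable T₀) (h₀ : η.fst = ρ.map fun x => (x, T₀ x)) :
    η.map (fun q => q.1.1) = ρ := by
  change η.map (Prod.fst ∘ Prod.fst) = ρ
  rw [← Measure.map_map measurable_fst measurable_fst]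
  change η.fst.fst = ρ
  rw [h₀, Measure.fst_map_prodMk hT₀, Measure.map_id']

lemma map_fst_snd_eq_of_snd_eq_graph (hT₁ : Measurable T₁) (h₁ : η.snd = ρ.map fun x => (x, T₁ x)) :
    η.map (fun q => q.2.1) = ρ := by
  change η.map (Prod.fst ∘ Prod.snd) = ρ
  rw [← Measure.map_map measurable_fst measurable_snd]
  change η.snd.fst = ρ
  rw [h₁, Measure.fst_map_prodMk hT₁, Measure.map_id']

lemma ae_snd_fst_eq_of_fst_eq_graph [MeasurableEq β] (hT₀ : Measurable T₀)
    (h₀ : η.fst = ρ.map fun x => (x, T₀ x)) : ∀ᵐ q ∂η, q.1.2 = T₀ q.1.1 :=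
  ae_of_ae_map measurable_fst.aemeasurable (p := fun p : α × β => p.2 = T₀ p.1)
    (by change ∀ᵐ p ∂η.fst, _; rw [h₀]; exact ae_snd_eq_of_map_graph hT₀)

lemma ae_snd_snd_eq_of_snd_eq_graph [MeasurableEq β] (hT₁ : Measurable T₁)
    (h₁ : η.snd = ρ.map fun x => (x, T₁ x)) : ∀ᵐ q ∂η, q.2.2 = T₁ q.2.1 :=
  ae_of_ae_map measurable_snd.aemeasurable (p := fun p : α × β => p.2 = T₁ p.1)
    (by change ∀ᵐ p ∂η.snd, _; rw [h₁]; exact ae_snd_eq_of_map_graph hT₁)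

lemma eLpNorm_dist_le_of_coupling [MetricSpace β] [BorelSpace β] [SecondCountableTopology β]
    (hT₀ : Measurable T₀) (hT₁ : Measurable T₁)
    (h₀ : η.fst = ρ.map fun x => (x, T₀ x)) (h₁ : η.snd = ρ.map fun x => (x, T₁ x))
    {p : ℝ≥0∞} (hp : 1 ≤ p) :
    eLpNorm (fun x => dist (T₀ x) (T₁ x)) p ρ
      ≤ eLpNorm (fun q => dist q.1.2 q.2.2) p η
        + eLpNorm (fun q => dist (T₁ q.1.1) (T₁ q.2.1)) p η :=
  calc eLpNorm (fun x => dist (T₀ x) (T₁ x)) p ρ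
      = eLpNorm (fun q => dist (T₀ q.1.1) (T₁ q.1.1)) p η := by
        conv_lhs => rw [← map_fst_fst_eq_of_fst_eq_graph hT₀ h₀]
        exact eLpNorm_map_measure (hT₀.dist hT₁).aestronglyMeasurable
          measurable_fst.fst.aemeasurable
    _ ≤ eLpNorm ((fun q => dist q.1.2 q.2.2) + fun q => dist (T₁ q.1.1) (T₁ q.2.1)) p η := by
        refine eLpNorm_mono_ae_real ?_
        filter_upwards [ae_snd_fst_eq_of_fst_eq_graph hT₀ h₀, ae_snd_snd_eq_of_snd_eq_graph hT₁ h₁]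
          with q hq₀ hq₁
        rw [Real.norm_of_nonneg dist_nonneg, Pi.add_apply, hq₀, hq₁]
        exact dist_triangle_right _ _ _
    _ ≤ _ := eLpNorm_add_le (measurable_fst.snd.dist measurable_snd.snd).aestronglyMeasurable
        ((hT₁.comp measurable_fst.fst).dist (hT₁.comp measurable_snd.fst)).aestronglyMeasurable hp

end Coupling

section Lp

variable {Ω : Type*} [MeasurableSpace Ω] {μ : Measure Ω}

lemma sq_eLpNorm_two_eq_lintegral (u : Ω → ℝ) :
    eLpNorm u 2 μ ^ 2 = ∫⁻ ω, ENNReal.ofReal (u ω ^ 2) ∂μ := by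
  have h := eLpNorm_nnreal_pow_eq_lintegral (f := u) (μ := μ) (p := 2) two_ne_zero
  simp only [NNReal.coe_ofNat, ENNReal.rpow_two, ENNReal.coe_ofNat] at h
  rw [h]
  refine lintegral_congr fun ω => ?_
  rw [Real.enorm_eq_ofReal_abs, ← ENNReal.ofReal_pow (abs_nonneg _), sq_abs]

lemma lintegral_ofReal_sq_add_mul_sq {u : Ω → ℝ} (hu : AEMeasurable u μ) (v : Ω → ℝ)
    {ε : ℝ} (hε : 0 ≤ ε) :
    ∫⁻ ω, ENNReal.ofReal (u ω ^ 2 + ε * v ω ^ 2) ∂μ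
      = eLpNorm u 2 μ ^ 2 + ENNReal.ofReal ε * eLpNorm v 2 μ ^ 2 := by
  simp_rw [sq_eLpNorm_two_eq_lintegral, ← lintegral_const_mul' _ _ ofReal_ne_top,
    ← ENNReal.ofReal_mul hε, ← lintegral_add_left' (hu.pow_const 2).ennreal_ofReal]
  exact lintegral_congr fun ω => ENNReal.ofReal_add (by positivity) (by positivity)

lemma eLpNorm_le_add_mul_of_le [IsProbabilityMeasure μ] {u v : Ω → ℝ}
    (hv : AEStronglyMeasurable v μ) {θ K : ℝ≥0} (h : ∀ ω, |u ω| ≤ θ + K * v ω)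
    {p : ℝ≥0∞} (hp : 1 ≤ p) : eLpNorm u p μ ≤ θ + K * eLpNorm v p μ :=
  calc eLpNorm u p μ ≤ eLpNorm ((fun _ => (θ : ℝ)) + (K : ℝ) • v) p μ := eLpNorm_mono_real h
    _ ≤ eLpNorm (fun _ => (θ : ℝ)) p μ + eLpNorm ((K : ℝ) • v) p μ :=
      eLpNorm_add_le aestronglyMeasurable_const (hv.const_smul _) hp
    _ = θ + K * eLpNorm v p μ := by
      rw [eLpNorm_const_smul, eLpNorm_const _ (zero_lt_one.trans_le hp).ne' (NeZero.ne μ)]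
      simp

end Lp

lemma UniformContinuous.exists_dist_le_add_mul {α β : Type*} [PseudoMetricSpace α]
    [PseudoMetricSpace β] {g : α → β} (hg : UniformContinuous g)
    (hb : Bornology.IsBounded (Set.range g)) {θ : ℝ} (hθ : 0 < θ) :
    ∃ K : ℝ≥0, ∀ x y, dist (g x) (g y) ≤ θ + K * dist x y := by
  obtain ⟨γ, hγ, hγg⟩ := Metric.uniformContinuous_iff.1 hg θ hθ
  set D := Metric.diam (Set.range g)
  refine ⟨⟨D / γ, by positivity⟩, fun x y => ?_⟩
  change dist (g x) (g y) ≤ θ + D / γ * dist x y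
  rcases lt_or_ge (dist x y) γ with hxy | hxy
  · exact (hγg hxy).le.trans (le_add_of_nonneg_right (by positivity))
  · calc dist (g x) (g y) ≤ D := Metric.dist_le_diam_of_mem hb ⟨x, rfl⟩ ⟨y, rfl⟩
      _ = D / γ * γ := (div_mul_cancel₀ _ hγ.ne').symm
      _ ≤ D / γ * dist x y := by gcongr
      _ ≤ θ + D / γ * dist x y := le_add_of_nonneg_left hθ.le

lemma eLpNorm_dist_comp_eq_of_map_eq {α Ω F : Type*} [MeasurableSpace α] [MeasurableSpace Ω]
    [NormedAddCommGroup F] {ρ : Measure α} {η : Measure Ω} {f g : α → F}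
    (hfg : AEStronglyMeasurable (fun x => dist (f x) (g x)) ρ) {Z : Ω → α} (hZ : Measurable Z)
    (hZρ : η.map Z = ρ) (p : ℝ≥0∞) :
    eLpNorm (fun ω => dist (f (Z ω)) (g (Z ω))) p η = eLpNorm (f - g) p ρ := by
  rw [← hZρ] at hfg ⊢
  change eLpNorm ((fun x => dist (f x) (g x)) ∘ Z) p η = _
  rw [← eLpNorm_map_measure hfg hZ.aemeasurable, ← eLpNorm_norm (f - g)]
  simp_rw [dist_eq_norm, Pi.sub_apply]

theorem MeasureTheory.MemLp.exists_eLpNorm_dist_comp_le {α F : Type*} [MetricSpace α]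
    [MeasurableSpace α] [BorelSpace α] [SecondCountableTopology α] [WeaklyLocallyCompactSpace α]
    [NormedAddCommGroup F] [NormedSpace ℝ F] {ρ : Measure α} [ρ.Regular] {f : α → F}
    (hf : MemLp f 2 ρ) {δ : ℝ≥0} (hδ : 0 < δ) (Ω : Type*) [MeasurableSpace Ω] :
    ∃ K : ℝ≥0, ∀ (η : Measure Ω) [IsProbabilityMeasure η] (X Y : Ω → α),
      Measurable X → Measurable Y → η.map X = ρ → η.map Y = ρ →
      eLpNorm (fun ω => dist (f (X ω)) (f (Y ω))) 2 η
        ≤ δ + K * eLpNorm (fun ω => dist (X ω) (Y ω)) 2 η := by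
  obtain ⟨g, hg_supp, hfg, hg_cont, -⟩ :=
    hf.exists_hasCompactSupport_eLpNorm_sub_le ofNat_ne_top (ε := ((δ / 3 : ℝ≥0) : ℝ≥0∞))
      (ENNReal.coe_ne_zero.2 (by positivity))
  obtain ⟨C, hC⟩ := hg_cont.bounded_above_of_compact_support hg_supp
  obtain ⟨K, hK⟩ := (hg_supp.uniformContinuous_of_continuous hg_cont).exists_dist_le_add_mul
    (isBounded_iff_forall_norm_le.2 ⟨C, by rintro _ ⟨x, rfl⟩; exact hC x⟩)
    (θ := ((δ / 3 : ℝ≥0) : ℝ)) (by positivity)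
  refine ⟨K, fun η _ X Y hX hY hXρ hYρ => ?_⟩
  have hfg_meas : AEStronglyMeasurable (fun x => dist (f x) (g x)) ρ :=
    (hf.1.sub hg_cont.aestronglyMeasurable).norm.congr
      (ae_of_all _ fun x => (dist_eq_norm _ _).symm)
  have hfg_comp : ∀ Z : Ω → α, Measurable Z → η.map Z = ρ →
      AEStronglyMeasurable (fun ω => dist (f (Z ω)) (g (Z ω))) η := fun Z hZ hZρ => by
    rw [← hZρ] at hfg_meas
    exact hfg_meas.comp_aemeasurable hZ.aemeasurable
  have hgXY_meas : AEStronglyMeasurable (fun ω => dist (g (X ω)) (g (Y ω))) η :=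
    ((by fun_prop : Continuous fun p : α × α => dist (g p.1) (g p.2)).measurable.comp
      (hX.prodMk hY)).aestronglyMeasurable
  have hclose : ∀ Z : Ω → α, Measurable Z → η.map Z = ρ →
      eLpNorm (fun ω => dist (f (Z ω)) (g (Z ω))) 2 η ≤ (δ / 3 : ℝ≥0) := fun Z hZ hZρ =>
    (eLpNorm_dist_comp_eq_of_map_eq hfg_meas hZ hZρ 2).trans_le hfg
  have hgXY : eLpNorm (fun ω => dist (g (X ω)) (g (Y ω))) 2 η
      ≤ (δ / 3 : ℝ≥0) + K * eLpNorm (fun ω => dist (X ω) (Y ω)) 2 η :=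
    eLpNorm_le_add_mul_of_le (hX.dist hY).aestronglyMeasurable
      (fun ω => (abs_of_nonneg dist_nonneg).trans_le (hK _ _)) one_le_two
  have hthirds : ((δ / 3 : ℝ≥0) : ℝ≥0∞) + (δ / 3 : ℝ≥0) + (δ / 3 : ℝ≥0) = δ := by
    rw [← coe_add, ← coe_add, _root_.add_thirds]
  calc eLpNorm (fun ω => dist (f (X ω)) (f (Y ω))) 2 η
      ≤ eLpNorm ((fun ω => dist (f (X ω)) (g (X ω))) + (fun ω => dist (g (X ω)) (g (Y ω)))
          + fun ω => dist (f (Y ω)) (g (Y ω))) 2 η := eLpNorm_mono_real fun ω => by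
        rw [Real.norm_of_nonneg dist_nonneg, Pi.add_apply, Pi.add_apply, dist_comm (f (Y ω))]
        exact dist_triangle4 _ _ _ _
    _ ≤ eLpNorm (fun ω => dist (f (X ω)) (g (X ω))) 2 η
          + eLpNorm (fun ω => dist (g (X ω)) (g (Y ω))) 2 η
          + eLpNorm (fun ω => dist (f (Y ω)) (g (Y ω))) 2 η :=
        (eLpNorm_add_le ((hfg_comp X hX hXρ).add hgXY_meas) (hfg_comp Y hY hYρ) one_le_two).trans
          (by gcongr; exact eLpNorm_add_le (hfg_comp X hX hXρ) hgXY_meas one_le_two)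
    _ ≤ (δ / 3 : ℝ≥0) + ((δ / 3 : ℝ≥0) + K * eLpNorm (fun ω => dist (X ω) (Y ω)) 2 η)
          + (δ / 3 : ℝ≥0) := by
        gcongr
        exacts [hclose X hX hXρ, hclose Y hY hYρ]
    _ = δ + K * eLpNorm (fun ω => dist (X ω) (Y ω)) 2 η := by
        rw [← hthirds]
        ring

lemma ENNReal.exists_lt_of_lt_sq {c N : ℝ≥0∞} (h : c < N ^ 2) : ∃ s < N, c < s ^ 2 := by
  have hroot : c ^ ((2 : ℕ) : ℝ)⁻¹ < N := by
    simpa only [pow_rpow_inv_natCast two_ne_zero] using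
      ENNReal.rpow_lt_rpow h (by positivity : (0 : ℝ) < ((2 : ℕ) : ℝ)⁻¹)
  obtain ⟨s, hcs, hsN⟩ := exists_between hroot
  refine ⟨s, hsN, ?_⟩
  simpa only [rpow_inv_natCast_pow two_ne_zero] using ENNReal.pow_lt_pow_left two_ne_zero hcs

lemma mul_sq_le_sq_add_mul_sq_of_le {N a b s ε : ℝ≥0∞} {δ K : ℝ≥0}
    (hN : N ≤ b + δ + K * a) (hs : s + δ + δ < N) (hε : ε * s ^ 2 * K ^ 2 ≤ δ ^ 2) :
    ε * s ^ 2 ≤ a ^ 2 + ε * b ^ 2 := by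
  rcases le_or_gt (K * a) (δ : ℝ≥0∞) with hKa | hKa
  · have hsb : s < b := by
      have := hs.trans_le (hN.trans (by gcongr : b + δ + K * a ≤ b + δ + δ))
      rwa [ENNReal.add_lt_add_iff_right coe_ne_top, ENNReal.add_lt_add_iff_right coe_ne_top] at this
    exact le_add_left (by gcongr)
  · have hK : (K : ℝ≥0∞) ≠ 0 := by rintro hK; simp [hK] at hKa
    have : ε * s ^ 2 * K ^ 2 < a ^ 2 * K ^ 2 :=
      hε.trans_lt ((ENNReal.pow_lt_pow_left two_ne_zero hKa).trans_eq (by ring))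
    exact le_add_right
      ((ENNReal.mul_lt_mul_iff_left (pow_ne_zero 2 hK) (pow_ne_top coe_ne_top)).1 this).le

section TauEps

variable {d : ℕ}

local notation "E" => EuclideanSpace ℝ (Fin d)

lemma tauEps_le_mul_lintegral (ρ : Measure E) {T₀ T₁ : E → E} (hT₀ : Measurable T₀)
    (hT₁ : Measurable T₁) {ε : ℝ} (hε : 0 ≤ ε) :
    tauEps ρ T₀ T₁ ε ≤ ENNReal.ofReal ε * ∫⁻ x, ENNReal.ofReal (dist (T₀ x) (T₁ x) ^ 2) ∂ρ := by
  have hdiag : Measurable fun x => ((x, T₀ x), (x, T₁ x)) :=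
    (measurable_id.prodMk hT₀).prodMk (measurable_id.prodMk hT₁)
  refine (iInf₂_le (ρ.map fun x => ((x, T₀ x), (x, T₁ x)))
    ⟨Measure.fst_map_prodMk (measurable_id.prodMk hT₁),
      Measure.snd_map_prodMk (measurable_id.prodMk hT₀)⟩).trans_eq ?_
  rw [lintegral_map (by fun_prop) hdiag, ← lintegral_const_mul' _ _ ofReal_ne_top]
  simp [ENNReal.ofReal_mul hε]

lemma eventually_mul_sq_le_tauEps (ρ : Measure E) [IsProbabilityMeasure ρ] {T₀ T₁ : E → E}
    (hT₀ : Measurable T₀) (hT₁ : Measurable T₁) (hT₁L2 : MemLp T₁ 2 ρ) {s : ℝ≥0∞}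
    (hs : s < eLpNorm (fun x => dist (T₀ x) (T₁ x)) 2 ρ) :
    ∀ᶠ ε in 𝓝[>] (0 : ℝ), ENNReal.ofReal ε * s ^ 2 ≤ tauEps ρ T₀ T₁ ε := by
  obtain ⟨r, hr, hsr⟩ := ENNReal.lt_iff_exists_add_pos_lt.1 hs
  obtain ⟨K, hK⟩ := hT₁L2.exists_eLpNorm_dist_comp_le (half_pos hr) ((E × E) × (E × E))
  have hsmall : ∀ᶠ ε in 𝓝[>] (0 : ℝ),
      ENNReal.ofReal ε * s ^ 2 * K ^ 2 ≤ ((r / 2 : ℝ≥0) : ℝ≥0∞) ^ 2 := by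
    have hlim : Tendsto (fun ε : ℝ => ENNReal.ofReal ε * (s ^ 2 * K ^ 2)) (𝓝[>] 0)
        (𝓝 (ENNReal.ofReal 0 * (s ^ 2 * K ^ 2))) :=
      ENNReal.Tendsto.mul_const
        ((ENNReal.continuous_ofReal.tendsto 0).mono_left nhdsWithin_le_nhds)
        (Or.inr (mul_ne_top (pow_ne_top hs.ne_top) (pow_ne_top coe_ne_top)))
    rw [ofReal_zero, zero_mul] at hlim
    simpa only [mul_assoc] using
      hlim.eventually (eventually_le_nhds (ENNReal.pow_pos (coe_pos.2 (half_pos hr)) 2))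
  filter_upwards [hsmall, self_mem_nhdsWithin] with ε hε hε₀
  refine le_iInf₂ fun η ⟨h₀, h₁⟩ => ?_
  have hX := map_fst_fst_eq_of_fst_eq_graph hT₀ h₀
  have hY := map_fst_snd_eq_of_snd_eq_graph hT₁ h₁
  have : IsProbabilityMeasure (η.map fun q => q.1.1) := hX ▸ inferInstance
  have : IsProbabilityMeasure η := Measure.isProbabilityMeasure_of_map fun q => q.1.1
  rw [lintegral_ofReal_sq_add_mul_sq (by fun_prop) _ (le_of_lt hε₀)]
  refine mul_sq_le_sq_add_mul_sq_of_le ?_ (by rwa [add_assoc, ← coe_add, add_halves]) hε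
  calc eLpNorm (fun x => dist (T₀ x) (T₁ x)) 2 ρ
      ≤ eLpNorm (fun q => dist q.1.2 q.2.2) 2 η
        + eLpNorm (fun q => dist (T₁ q.1.1) (T₁ q.2.1)) 2 η :=
        eLpNorm_dist_le_of_coupling hT₀ hT₁ h₀ h₁ one_le_two
    _ ≤ _ := by
      rw [add_assoc]
      gcongr
      exact hK η _ _ measurable_fst.fst measurable_snd.fst hX hY

end TauEps

theorem tauEps_tendsto_general {d : ℕ}
    (ρ μ₁ : Measure (EuclideanSpace ℝ (Fin d)))
    [IsProbabilityMeasure ρ]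
    (hμ₁c : IsCompact (msupport μ₁))
    (T₀ T₁ : EuclideanSpace ℝ (Fin d) → EuclideanSpace ℝ (Fin d))
    (hm₀ : Measurable T₀) (hm₁ : Measurable T₁)
    (hp₁ : Measure.map T₁ ρ = μ₁) :
    Tendsto (fun ε : ℝ => tauEps ρ T₀ T₁ ε / ENNReal.ofReal ε)
      (nhdsWithin 0 (Set.Ioi 0))
      (nhds (∫⁻ x, ENNReal.ofReal (dist (T₀ x) (T₁ x) ^ 2) ∂ρ)) := by
  have hL : ∫⁻ x, ENNReal.ofReal (dist (T₀ x) (T₁ x) ^ 2) ∂ρ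
      = eLpNorm (fun x => dist (T₀ x) (T₁ x)) 2 ρ ^ 2 :=
    (sq_eLpNorm_two_eq_lintegral _).symm
  refine tendsto_order.2 ⟨fun c hc => ?_, fun c hc => ?_⟩
  · obtain ⟨s, hsN, hcs⟩ := exists_lt_of_lt_sq (hL ▸ hc)
    filter_upwards [eventually_mul_sq_le_tauEps ρ hm₀ hm₁
      (memLp_of_map_eq_of_isCompact_msupport hm₁ hp₁ hμ₁c 2) hsN, self_mem_nhdsWithin]
      with ε hε hε₀
    refine hcs.trans_le ((ENNReal.le_div_iff_mul_le ?_ (Or.inl ofReal_ne_top)).2 ?_)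
    · exact Or.inl (ENNReal.ofReal_pos.2 hε₀).ne'
    · rwa [mul_comm]
  · filter_upwards [self_mem_nhdsWithin] with ε hε₀
    exact (ENNReal.div_le_of_le_mul ((tauEps_le_mul_lintegral ρ hm₀ hm₁ (le_of_lt hε₀)).trans_eq
      (mul_comm _ _))).trans_lt hc

/-- As `ε → 0⁺`, `ε⁻¹ τ_{c_ε}(γ₀, γ₁) → ‖T₀ - T₁‖²_{L²(ρ)}`. -/
theorem tauEps_tendsto {d : ℕ}
    (ρ μ₀ μ₁ : Measure (EuclideanSpace ℝ (Fin d)))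
    [IsProbabilityMeasure ρ] [IsProbabilityMeasure μ₀] [IsProbabilityMeasure μ₁]
    (hρc : IsCompact (msupport ρ)) (hμ₀c : IsCompact (msupport μ₀))
    (hμ₁c : IsCompact (msupport μ₁))
    (T₀ T₁ : EuclideanSpace ℝ (Fin d) → EuclideanSpace ℝ (Fin d))
    (hm₀ : Measurable T₀) (hm₁ : Measurable T₁)
    (hp₀ : Measure.map T₀ ρ = μ₀) (hp₁ : Measure.map T₁ ρ = μ₁)
    -- `T₀`, `T₁` are the optimal quadratic-cost maps: the induced plans are optimal
    (hopt₀ : ∀ η : Measure (EuclideanSpace ℝ (Fin d) × EuclideanSpace ℝ (Fin d)),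
      η.fst = ρ → η.snd = μ₀ →
      ∫⁻ q, ENNReal.ofReal (dist q.1 q.2 ^ 2) ∂(Measure.map (fun x => (x, T₀ x)) ρ)
        ≤ ∫⁻ q, ENNReal.ofReal (dist q.1 q.2 ^ 2) ∂η)
    (hopt₁ : ∀ η : Measure (EuclideanSpace ℝ (Fin d) × EuclideanSpace ℝ (Fin d)),
      η.fst = ρ → η.snd = μ₁ →
      ∫⁻ q, ENNReal.ofReal (dist q.1 q.2 ^ 2) ∂(Measure.map (fun x => (x, T₁ x)) ρ)
        ≤ ∫⁻ q, ENNReal.ofReal (dist q.1 q.2 ^ 2) ∂η) :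
    Tendsto (fun ε : ℝ => tauEps ρ T₀ T₁ ε / ENNReal.ofReal ε)
      (nhdsWithin 0 (Set.Ioi 0))
      (nhds (∫⁻ x, ENNReal.ofReal (dist (T₀ x) (T₁ x) ^ 2) ∂ρ)) :=
  tauEps_tendsto_general ρ μ₁ hμ₁c T₀ T₁ hm₀ hm₁ hp₁
end
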